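/- arXiv:2401.16491 — 5 statements merged into one kernel-verified Lean document; each statement's English description precedes it below -/
import Mathlib

section
/- Let F be a regular family of finite subsets of ℕ, ℓ ≥ 2, and T ∈ 𝒯^{M,(ℓ)}. Then: (1) T' = {t ∈ T : |t| ≤ ℓ−1} ∈ 𝒯^{M,(ℓ−1)}. (2) If n₁ is the root entry of T and n₁ < n₂ < ⋯ < n_k are chosen so that {(n₁, n_i) : i = 1, …, k} = {t ∈ T : |t| = 2}, then for each i = 1, …, k the tree T^{(i)} = {(n_i, s) : s ∈ {∅} ∪ [[ℕ]]^{<ω} with (n₁, n_i, s) ∈ T} belongs to ⋃_{j=1}^{ℓ−1} 𝒯^{M,(j)}, and T^{(i)} ∈ 𝒯^{M,(ℓ−1)} for at least one i. Moreover, if T ∈ 𝒯^{(ℓ)}, then T' ∈ 𝒯^{(ℓ−1)} and each T^{(i)} ∈ ⋃_{j=1}^{ℓ−1} 𝒯^{(j)}. -/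
noncomputable section

open scoped Classical

/-- `A < B` for finite sets of naturals: every element of `A` is smaller than every
element of `B` (i.e. `max A < min B`, with the conventions `∅ < B` and `A < ∅`). -/
def finLT (A B : Finset ℕ) : Prop := ∀ a ∈ A, ∀ b ∈ B, a < b

/-- The minimum of a finite set of naturals (`0` if the set is empty; it is only ever
used for nonempty sets). -/
def sMin (A : Finset ℕ) : ℕ := sInf (A : Set ℕ)

/-- The composition `M[N]` of two families of finite subsets of `ℕ`:
all unions `F_1 ∪ ⋯ ∪ F_k` with `F_i ∈ N` nonempty, `F_1 < F_2 < ⋯ < F_k` and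
`{min F_i : i = 1, …, k} ∈ M`. -/
def famComp (M N : Set (Finset ℕ)) : Set (Finset ℕ) :=
  {A | ∃ (k : ℕ) (F : Fin k → Finset ℕ),
        (∀ i, F i ∈ N) ∧ (∀ i, (F i).Nonempty) ∧
        (∀ i j : Fin k, i < j → finLT (F i) (F j)) ∧
        (Finset.univ.image fun i => sMin (F i)) ∈ M ∧
        A = Finset.univ.biUnion F}

/-- `B` is a spread of `A`: there is an injection `f` of `A` onto `B` with `a ≤ f a`
for all `a ∈ A` (equivalently, writing `A = {a_1 < ⋯ < a_n}` and
`B = {b_1 < ⋯ < b_n}`, one has `a_i ≤ b_i` for all `i`). -/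
def IsSpread (A B : Finset ℕ) : Prop :=
  ∃ f : ℕ → ℕ, Set.InjOn f A ∧ (∀ a ∈ A, a ≤ f a) ∧ B = A.image f

/-- A family of finite subsets of `ℕ` is regular if it is hereditary, spreading, and
compact as a subset of `{0,1}^ℕ` (with the product of discrete topologies). -/
def IsRegularFam (F : Set (Finset ℕ)) : Prop :=
  (∀ A ∈ F, ∀ B ⊆ A, B ∈ F) ∧
  (∀ A ∈ F, ∀ B : Finset ℕ, IsSpread A B → B ∈ F) ∧
  IsCompact ((fun A : Finset ℕ => fun n : ℕ => decide (n ∈ A)) '' F : Set (ℕ → Bool))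

/-- `t` is a terminal node of the (finite) tree `T ⊆ [[ℕ]]^{<ω}`:
no proper extension of `t` lies in `T`. -/
def IsTerminal (T : Finset (List ℕ)) (t : List ℕ) : Prop :=
  t ∈ T ∧ ∀ u ∈ T, t <+: u → u = t

/-- The support of a node `s` in the tree `T`:
`supp(s) = {t(|t|) : t ⪰ s, t terminal in T}`. -/
def nodeSupp (T : Finset (List ℕ)) (s : List ℕ) : Set ℕ :=
  {m | ∃ t ∈ T, s <+: t ∧ IsTerminal T t ∧ t.getLast? = some m}

/-- `s ≺_lex t`: `s` and `t` are `⪯`-incomparable and `s` precedes `t`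
lexicographically. -/
def LexInc (s t : List ℕ) : Prop :=
  ¬ s <+: t ∧ ¬ t <+: s ∧ List.Lex (· < ·) s t

/-- `U < V` for sets of naturals. -/
def setLT (U V : Set ℕ) : Prop := ∀ a ∈ U, ∀ b ∈ V, a < b

/-- An `F`-allowable tree: a finite set of nonempty nondecreasing finite sequences of
naturals satisfying (T1)–(T4). -/
structure IsAllowTree (F : Set (Finset ℕ)) (T : Finset (List ℕ)) : Prop where
  /-- nodes are nonempty nondecreasing sequences -/
  nodes : ∀ t ∈ T, t ≠ [] ∧ t.Pairwise (· ≤ ·)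
  /-- (T1): closed under nonempty initial segments -/
  downward : ∀ t ∈ T, ∀ s : List ℕ, s ≠ [] → s <+: t → s ∈ T
  /-- (T2): there is a root of length 1 below every node -/
  exroot : ∃ n : ℕ, [n] ∈ T ∧ ∀ t ∈ T, [n] <+: t
  /-- (T3): a non-terminal node `t` has the successor `(t, t(|t|))`, and the set of its
  immediate-successor labels lies in `F` -/
  extend : ∀ t ∈ T, ¬ IsTerminal T t →
      (t ++ [t.getLast!]) ∈ T ∧ ∃ J : Finset ℕ, (∀ j : ℕ, j ∈ J ↔ t ++ [j] ∈ T) ∧ J ∈ F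
  /-- (T4): lexicographically comparable incomparable nodes have disjoint supports -/
  suppDisj : ∀ s ∈ T, ∀ t ∈ T, LexInc s t → Disjoint (nodeSupp T s) (nodeSupp T t)

/-- An `F`-admissible tree: an `F`-allowable tree satisfying in addition (T5). -/
def IsAdmTree (F : Set (Finset ℕ)) (T : Finset (List ℕ)) : Prop :=
  IsAllowTree F T ∧ ∀ s ∈ T, ∀ t ∈ T, LexInc s t → setLT (nodeSupp T s) (nodeSupp T t)

/-- The length `|T|` of a tree: the maximal length of its nodes. -/
def treeLen (T : Finset (List ℕ)) : ℕ := T.sup List.length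

/-- The subtree `T^{(m)} = {(m, s) : (n₁, m, s) ∈ T}` of `T` obtained by passing to the
second-level node `(n₁, m)` (where `n₁` is the root entry) and deleting the root. -/
def subTree (T : Finset (List ℕ)) (m : ℕ) : Finset (List ℕ) :=
  (T.filter fun t => 2 ≤ t.length ∧ t[1]? = some m).image List.tail

/-!
Both reductions act on a tree node by node. Truncating at level `k ≥ 1` can only make
supports smaller: a node that becomes terminal extends in `T`, by repeating its last entry
as (T3) allows, to a terminal node of `T` with the same last entry. Passing to the subtree
below `(n₁, m)` is the bijection `u ↦ n₁ :: u` onto the nodes above `(n₁, m)`, which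
preserves terminal nodes, supports and the lexicographic order. The lengths are read off a
node of maximal length.
-/

theorem lexInc_cons_cons {a : ℕ} {u v : List ℕ} : LexInc (a :: u) (a :: v) ↔ LexInc u v := by
  simp only [LexInc, List.cons_prefix_cons, true_and, List.cons_lex_cons_iff, lt_self_iff_false,
    false_or]

theorem singleton_prefix_of_prefix {α : Type*} {m : α} {s u : List α} (hs : s ≠ [])
    (hsu : s <+: u) (hmu : [m] <+: u) : [m] <+: s := by
  obtain ⟨a, r, rfl⟩ := List.exists_cons_of_ne_nil hs
  obtain ⟨v, rfl⟩ := hsu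
  simpa using hmu

section Trees

variable {F : Set (Finset ℕ)} {T : Finset (List ℕ)}

theorem IsAllowTree.exists_length_eq_treeLen (hT : IsAllowTree F T) :
    ∃ t ∈ T, t.length = treeLen T := by
  obtain ⟨n, hn, -⟩ := hT.exroot
  obtain ⟨t, ht, hlen⟩ := T.exists_mem_eq_sup ⟨[n], hn⟩ List.length
  exact ⟨t, ht, hlen.symm⟩

theorem IsAllowTree.exists_length_eq (hT : IsAllowTree F T) {k : ℕ} (hk₁ : 1 ≤ k)
    (hk : k ≤ treeLen T) : ∃ t ∈ T, t.length = k := by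
  obtain ⟨t, ht, hlen⟩ := hT.exists_length_eq_treeLen
  have hlen_take : (t.take k).length = k := by simp only [List.length_take]; omega
  refine ⟨t.take k, hT.downward t ht _ ?_ (List.take_prefix k t), hlen_take⟩
  rw [← List.length_pos_iff, hlen_take]
  exact hk₁

theorem IsAllowTree.exists_terminal_extension (hT : IsAllowTree F T) {t : List ℕ}
    (ht : t ∈ T) : ∃ t' ∈ T, t <+: t' ∧ IsTerminal T t' ∧ t'.getLast? = t.getLast? := by
  obtain ⟨t', ht'S, hmax⟩ := (T.filter fun t' => t <+: t' ∧ t'.getLast? = t.getLast?)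
    |>.exists_max_image List.length ⟨t, Finset.mem_filter.2 ⟨ht, List.prefix_refl t, rfl⟩⟩
  obtain ⟨ht', hpre, hlast⟩ := Finset.mem_filter.1 ht'S
  refine ⟨t', ht', hpre, by_contra fun hnt => ?_, hlast⟩
  have hne : t' ≠ [] := (hT.nodes t' ht').1
  have hlast! : t'.getLast? = some t'.getLast! := by simp [List.getLast?_eq_some_getLast hne]
  have hlonger := hmax _ <| Finset.mem_filter.2 ⟨(hT.extend t' ht' hnt).1,
    hpre.trans (List.prefix_append _ _), by rw [List.getLast?_concat, ← hlast!, hlast]⟩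
  simp at hlonger

section Truncation

variable {k : ℕ}

theorem nodeSupp_filter_length_le_subset (hT : IsAllowTree F T) (s : List ℕ) :
    nodeSupp (T.filter fun t => t.length ≤ k) s ⊆ nodeSupp T s := by
  rintro a ⟨t, ht, hst, -, hlast⟩
  obtain ⟨t', ht', htt', hterm', hlast'⟩ :=
    hT.exists_terminal_extension (Finset.mem_filter.1 ht).1
  exact ⟨t', ht', hst.trans htt', hterm', hlast'.trans hlast⟩

theorem not_isTerminal_filter_length_le {t : List ℕ}
    (ht : t ∈ T.filter fun t => t.length ≤ k)
    (hnt : ¬ IsTerminal (T.filter fun t => t.length ≤ k) t) :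
    ¬ IsTerminal T t ∧ t.length < k := by
  obtain ⟨u, hu, htu, hne⟩ :
      ∃ u ∈ T.filter fun t => t.length ≤ k, t <+: u ∧ u ≠ t := by
    simpa [IsTerminal, ht, and_assoc] using hnt
  obtain ⟨huT, hu_len⟩ := Finset.mem_filter.1 hu
  have hlt : t.length < u.length :=
    htu.length_le.lt_of_ne fun h => hne (htu.eq_of_length h).symm
  exact ⟨fun hterm => hne (hterm.2 u huT htu), by omega⟩

theorem IsAllowTree.filter_length_le (hT : IsAllowTree F T) (hk : 1 ≤ k) :
    IsAllowTree F (T.filter fun t => t.length ≤ k) where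
  nodes t ht := hT.nodes t (Finset.mem_filter.1 ht).1
  downward t ht s hs hst := by
    obtain ⟨htT, ht_len⟩ := Finset.mem_filter.1 ht
    exact Finset.mem_filter.2 ⟨hT.downward t htT s hs hst, hst.length_le.trans ht_len⟩
  exroot := by
    obtain ⟨n, hn, hroot⟩ := hT.exroot
    exact ⟨n, Finset.mem_filter.2 ⟨hn, hk⟩, fun t ht => hroot t (Finset.mem_filter.1 ht).1⟩
  extend t ht hnt := by
    obtain ⟨hntT, hlt⟩ := not_isTerminal_filter_length_le ht hnt
    have hsucc : ∀ j, t ++ [j] ∈ T.filter (fun t => t.length ≤ k) ↔ t ++ [j] ∈ T := by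
      intro j
      simp only [Finset.mem_filter, List.length_append, List.length_singleton,
        and_iff_left_iff_imp]
      omega
    obtain ⟨hext, J, hJ, hJF⟩ := hT.extend t (Finset.mem_filter.1 ht).1 hntT
    exact ⟨(hsucc _).2 hext, J, fun j => (hJ j).trans (hsucc j).symm, hJF⟩
  suppDisj s hs t ht hst :=
    (hT.suppDisj s (Finset.mem_filter.1 hs).1 t (Finset.mem_filter.1 ht).1 hst).mono
      (nodeSupp_filter_length_le_subset hT s) (nodeSupp_filter_length_le_subset hT t)

theorem IsAdmTree.filter_length_le (hT : IsAdmTree F T) (hk : 1 ≤ k) :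
    IsAdmTree F (T.filter fun t => t.length ≤ k) :=
  ⟨hT.1.filter_length_le hk, fun s hs t ht hst a ha b hb =>
    hT.2 s (Finset.mem_filter.1 hs).1 t (Finset.mem_filter.1 ht).1 hst a
      (nodeSupp_filter_length_le_subset hT.1 s ha) b (nodeSupp_filter_length_le_subset hT.1 t hb)⟩

theorem treeLen_filter_length_le (hT : IsAllowTree F T) (hk₁ : 1 ≤ k) (hk : k ≤ treeLen T) :
    treeLen (T.filter fun t => t.length ≤ k) = k := by
  refine le_antisymm (Finset.sup_le fun t ht => (Finset.mem_filter.1 ht).2) ?_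
  obtain ⟨t, ht, hlen⟩ := hT.exists_length_eq hk₁ hk
  calc k = t.length := hlen.symm
    _ ≤ _ := Finset.le_sup (f := List.length) (Finset.mem_filter.2 ⟨ht, hlen.le⟩)

end Truncation

theorem treeLen_subTree_le (m : ℕ) : treeLen (subTree T m) ≤ treeLen T - 1 := by
  refine Finset.sup_le fun u hu => ?_
  obtain ⟨t, ht, rfl⟩ := Finset.mem_image.1 hu
  rw [List.length_tail]
  exact Nat.sub_le_sub_right (Finset.le_sup (f := List.length) (Finset.mem_filter.1 ht).1) 1

theorem one_le_treeLen_subTree {n₁ m : ℕ} (hm : [n₁, m] ∈ T) :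
    1 ≤ treeLen (subTree T m) :=
  Finset.le_sup (f := List.length) (b := [m]) <|
    Finset.mem_image.2 ⟨[n₁, m], Finset.mem_filter.2 ⟨hm, le_rfl, rfl⟩, rfl⟩

section SubTree

variable {n₁ m : ℕ}

theorem eq_cons_of_mem (hroot : ∀ t ∈ T, [n₁] <+: t) {t : List ℕ} (ht : t ∈ T) :
    ∃ r, t = n₁ :: r := by
  obtain ⟨r, rfl⟩ := hroot t ht
  exact ⟨r, rfl⟩

theorem mem_subTree_iff (hroot : ∀ t ∈ T, [n₁] <+: t) {u : List ℕ} :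
    u ∈ subTree T m ↔ n₁ :: u ∈ T ∧ [m] <+: u := by
  simp only [List.singleton_prefix_iff_head?_eq_some]
  constructor
  · intro hu
    obtain ⟨t, ht, rfl⟩ := Finset.mem_image.1 hu
    obtain ⟨htT, hlen, hsnd⟩ := Finset.mem_filter.1 ht
    obtain ⟨r, rfl⟩ := eq_cons_of_mem hroot htT
    cases r with
    | nil => simp at hlen
    | cons a r => exact ⟨htT, by simpa using hsnd⟩
  · rintro ⟨hu, hhead⟩
    cases u with
    | nil => simp at hhead
    | cons a r =>
      exact Finset.mem_image.2
        ⟨n₁ :: a :: r, Finset.mem_filter.2 ⟨hu, by simpa using hhead⟩, rfl⟩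

theorem isTerminal_subTree_iff (hroot : ∀ t ∈ T, [n₁] <+: t) {u : List ℕ}
    (hu : u ∈ subTree T m) :
    IsTerminal (subTree T m) u ↔ IsTerminal T (n₁ :: u) := by
  obtain ⟨huT, hmu⟩ := (mem_subTree_iff hroot).1 hu
  constructor
  · rintro ⟨-, hmax⟩
    refine ⟨huT, fun t ht hut => ?_⟩
    obtain ⟨w, rfl⟩ := eq_cons_of_mem hroot ht
    have huw := (List.cons_prefix_cons.1 hut).2
    rw [hmax w ((mem_subTree_iff hroot).2 ⟨ht, hmu.trans huw⟩) huw]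
  · rintro ⟨-, hmax⟩
    refine ⟨hu, fun w hw huw => ?_⟩
    simpa using hmax _ ((mem_subTree_iff hroot).1 hw).1 (List.cons_prefix_cons.2 ⟨rfl, huw⟩)

theorem nodeSupp_subTree (hroot : ∀ t ∈ T, [n₁] <+: t) {u : List ℕ}
    (hu : u ∈ subTree T m) :
    nodeSupp (subTree T m) u = nodeSupp T (n₁ :: u) := by
  have hmu := ((mem_subTree_iff hroot).1 hu).2
  ext a
  constructor
  · rintro ⟨w, hw, huw, hterm, hlast⟩
    have hmw := ((mem_subTree_iff hroot).1 hw).2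
    refine ⟨n₁ :: w, ((mem_subTree_iff hroot).1 hw).1, List.cons_prefix_cons.2 ⟨rfl, huw⟩,
      (isTerminal_subTree_iff hroot hw).1 hterm, ?_⟩
    rw [List.getLast?_cons_of_ne_nil (List.ne_nil_of_length_pos hmw.length_le), hlast]
  · rintro ⟨t, ht, hut, hterm, hlast⟩
    obtain ⟨w, rfl⟩ := eq_cons_of_mem hroot ht
    have huw := (List.cons_prefix_cons.1 hut).2
    have hw : w ∈ subTree T m := (mem_subTree_iff hroot).2 ⟨ht, hmu.trans huw⟩
    refine ⟨w, hw, huw, (isTerminal_subTree_iff hroot hw).2 hterm, ?_⟩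
    rwa [← List.getLast?_cons_of_ne_nil (List.ne_nil_of_length_pos (hmu.trans huw).length_le)]

theorem IsAllowTree.subTree (hT : IsAllowTree F T) (hroot : ∀ t ∈ T, [n₁] <+: t)
    (hm : [n₁, m] ∈ T) :
    IsAllowTree F (subTree T m) where
  nodes u hu := by
    obtain ⟨huT, hmu⟩ := (mem_subTree_iff hroot).1 hu
    exact ⟨List.ne_nil_of_length_pos hmu.length_le, (hT.nodes _ huT).2.of_cons⟩
  downward u hu s hs hsu := by
    obtain ⟨huT, hmu⟩ := (mem_subTree_iff hroot).1 hu
    refine (mem_subTree_iff hroot).2 ⟨hT.downward _ huT _ (List.cons_ne_nil _ _)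
      (List.cons_prefix_cons.2 ⟨rfl, hsu⟩), ?_⟩
    exact singleton_prefix_of_prefix hs hsu hmu
  exroot := ⟨m, (mem_subTree_iff hroot).2 ⟨hm, List.prefix_refl _⟩,
    fun u hu => ((mem_subTree_iff hroot).1 hu).2⟩
  extend u hu hnt := by
    obtain ⟨huT, hmu⟩ := (mem_subTree_iff hroot).1 hu
    have hne : u ≠ [] := List.ne_nil_of_length_pos hmu.length_le
    obtain ⟨hext, J, hJ, hJF⟩ := hT.extend _ huT (mt (isTerminal_subTree_iff hroot hu).2 hnt)
    have hsucc : ∀ j, u ++ [j] ∈ _root_.subTree T m ↔ n₁ :: u ++ [j] ∈ T := fun j =>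
      (mem_subTree_iff hroot).trans (and_iff_left (hmu.trans (List.prefix_append _ _)))
    have hlast : (n₁ :: u).getLast! = u.getLast! := by simp [List.getLast?_cons_of_ne_nil hne]
    exact ⟨(hsucc _).2 (hlast ▸ hext), J, fun j => (hJ j).trans (hsucc j).symm, hJF⟩
  suppDisj s hs t ht hst := by
    rw [nodeSupp_subTree hroot hs, nodeSupp_subTree hroot ht]
    exact hT.suppDisj _ ((mem_subTree_iff hroot).1 hs).1 _ ((mem_subTree_iff hroot).1 ht).1
      (lexInc_cons_cons.2 hst)

theorem IsAdmTree.subTree (hT : IsAdmTree F T) (hroot : ∀ t ∈ T, [n₁] <+: t)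
    (hm : [n₁, m] ∈ T) :
    IsAdmTree F (subTree T m) := by
  refine ⟨hT.1.subTree hroot hm, fun s hs t ht hst => ?_⟩
  rw [nodeSupp_subTree hroot hs, nodeSupp_subTree hroot ht]
  exact hT.2 _ ((mem_subTree_iff hroot).1 hs).1 _ ((mem_subTree_iff hroot).1 ht).1
    (lexInc_cons_cons.2 hst)

theorem exists_treeLen_subTree_eq (hT : IsAllowTree F T) (hroot : ∀ t ∈ T, [n₁] <+: t)
    (h2 : 2 ≤ treeLen T) : ∃ m, [n₁, m] ∈ T ∧ treeLen (subTree T m) = treeLen T - 1 := by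
  obtain ⟨t, ht, hlen⟩ := hT.exists_length_eq_treeLen
  obtain ⟨_ | ⟨a, r⟩, rfl⟩ := eq_cons_of_mem hroot ht
  · simp at hlen; omega
  refine ⟨a, hT.downward _ ht _ (List.cons_ne_nil _ _) ⟨r, rfl⟩,
    le_antisymm (treeLen_subTree_le a) ?_⟩
  have har : a :: r ∈ subTree T a := (mem_subTree_iff hroot).2 ⟨ht, ⟨r, rfl⟩⟩
  calc treeLen T - 1 = (a :: r).length := by simp only [← hlen, List.length_cons]; omega
    _ ≤ _ := Finset.le_sup (f := List.length) har

end SubTree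

end Trees

theorem tree_reduction_general (F : Set (Finset ℕ))
    (ℓ : ℕ) (hℓ : 2 ≤ ℓ) (T : Finset (List ℕ))
    (hT : IsAllowTree F T) (hlen : treeLen T = ℓ) :
    (IsAllowTree F (T.filter fun t => t.length ≤ ℓ - 1) ∧
      treeLen (T.filter fun t => t.length ≤ ℓ - 1) = ℓ - 1) ∧
    (∀ n₁ : ℕ, [n₁] ∈ T → (∀ t ∈ T, [n₁] <+: t) →
      (∀ m : ℕ, [n₁, m] ∈ T →
        IsAllowTree F (subTree T m) ∧ 1 ≤ treeLen (subTree T m) ∧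
          treeLen (subTree T m) ≤ ℓ - 1) ∧
      ∃ m : ℕ, [n₁, m] ∈ T ∧ treeLen (subTree T m) = ℓ - 1) ∧
    (IsAdmTree F T →
      IsAdmTree F (T.filter fun t => t.length ≤ ℓ - 1) ∧
      ∀ n₁ : ℕ, [n₁] ∈ T → (∀ t ∈ T, [n₁] <+: t) →
        ∀ m : ℕ, [n₁, m] ∈ T →
          IsAdmTree F (subTree T m) ∧ 1 ≤ treeLen (subTree T m) ∧
            treeLen (subTree T m) ≤ ℓ - 1) := by
  subst hlen
  have hk : 1 ≤ treeLen T - 1 := by omega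
  refine ⟨⟨hT.filter_length_le hk, treeLen_filter_length_le hT hk (Nat.sub_le _ 1)⟩,
    fun n₁ _ hroot => ⟨fun m hm => ⟨hT.subTree hroot hm, one_le_treeLen_subTree hm,
      treeLen_subTree_le m⟩, exists_treeLen_subTree_eq hT hroot hℓ⟩,
    fun hadm => ⟨hadm.filter_length_le hk, fun n₁ _ hroot m hm =>
      ⟨hadm.subTree hroot hm, one_le_treeLen_subTree hm, treeLen_subTree_le m⟩⟩⟩

/-- Let `F` be a regular family, `ℓ ≥ 2` and `T ∈ 𝒯^{M,(ℓ)}`.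
Then (1) `T' = {t ∈ T : |t| ≤ ℓ-1} ∈ 𝒯^{M,(ℓ-1)}`; (2) each of the trees
`T^{(i)}`, indexed by the second-level nodes `(n₁, n_i)` of `T`, belongs to
`⋃_{j=1}^{ℓ-1} 𝒯^{M,(j)}`, and at least one of them belongs to `𝒯^{M,(ℓ-1)}`.
Moreover, if `T ∈ 𝒯^{(ℓ)}`, then `T' ∈ 𝒯^{(ℓ-1)}` and each
`T^{(i)} ∈ ⋃_{j=1}^{ℓ-1} 𝒯^{(j)}`. -/
theorem tree_reduction (F : Set (Finset ℕ)) (hF : IsRegularFam F)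
    (ℓ : ℕ) (hℓ : 2 ≤ ℓ) (T : Finset (List ℕ))
    (hT : IsAllowTree F T) (hlen : treeLen T = ℓ) :
    (IsAllowTree F (T.filter fun t => t.length ≤ ℓ - 1) ∧
      treeLen (T.filter fun t => t.length ≤ ℓ - 1) = ℓ - 1) ∧
    (∀ n₁ : ℕ, [n₁] ∈ T → (∀ t ∈ T, [n₁] <+: t) →
      (∀ m : ℕ, [n₁, m] ∈ T →
        IsAllowTree F (subTree T m) ∧ 1 ≤ treeLen (subTree T m) ∧
          treeLen (subTree T m) ≤ ℓ - 1) ∧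
      ∃ m : ℕ, [n₁, m] ∈ T ∧ treeLen (subTree T m) = ℓ - 1) ∧
    (IsAdmTree F T →
      IsAdmTree F (T.filter fun t => t.length ≤ ℓ - 1) ∧
      ∀ n₁ : ℕ, [n₁] ∈ T → (∀ t ∈ T, [n₁] <+: t) →
        ∀ m : ℕ, [n₁, m] ∈ T →
          IsAdmTree F (subTree T m) ∧ 1 ≤ treeLen (subTree T m) ∧
            treeLen (subTree T m) ≤ ℓ - 1) :=
  tree_reduction_general F ℓ hℓ T hT hlen
end
end

section
/- Let F be a regular family of finite subsets of ℕ and 0 < θ < 1. Then Ψ is a surjective map from 𝒯^{M,(1)} onto P^M_0(F,θ) \ {0}, and for every ℓ ≥ 2, Ψ is a surjective map from 𝒯^{M,(ℓ)} onto P^M_{ℓ−1}(F,θ) \ P^M_{ℓ−2}(F,θ). Moreover, Ψ is a surjective map from 𝒯^{(1)} onto P_0(F,θ) \ {0}, and for ℓ ≥ 2, from 𝒯^{(ℓ)} onto P_{ℓ−1}(F,θ) \ P_{ℓ−2}(F,θ). -/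
noncomputable section

open scoped Classical

/-- `A_n = {E ⊆ ℕ : |E| ≤ n}`. -/
def Acard (n : ℕ) : Set (Finset ℕ) := {E : Finset ℕ | E.card ≤ n}

/-- Elements of `c₀₀` (and the functionals on it): finitely supported real sequences. -/
abbrev Fn := ℕ →₀ ℝ

/-- The action `f*(x)` of a functional on a vector: `Σ_n f(n) x(n)`. -/
def pairF (f x : Fn) : ℝ := f.sum fun n a => a * x n

/-- A (finite) sequence of finite sets is `F`-admissible if the sets are nonempty,
consecutive (`E_1 < E_2 < ⋯ < E_d`) and `{min E_i : i ≤ d} ∈ F`. -/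
def AdmissibleSeq (F : Set (Finset ℕ)) {d : ℕ} (E : Fin d → Finset ℕ) : Prop :=
  (∀ i, (E i).Nonempty) ∧ (∀ i j : Fin d, i < j → finLT (E i) (E j)) ∧
  (Finset.univ.image fun i => sMin (E i)) ∈ F

/-- A (finite) sequence of finite sets is `F`-allowable if the sets are nonempty,
pairwise disjoint and `{min E_i : i ≤ d} ∈ F`. -/
def AllowableSeq (F : Set (Finset ℕ)) {d : ℕ} (E : Fin d → Finset ℕ) : Prop :=
  (∀ i, (E i).Nonempty) ∧ (∀ i j : Fin d, i ≠ j → Disjoint (E i) (E j)) ∧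
  (Finset.univ.image fun i => sMin (E i)) ∈ F

/-- The sets `K_m(F, θ)` generating the norming set of the Tsirelson space `T[F, θ]`. -/
def Kn (F : Set (Finset ℕ)) (θ : ℝ) : ℕ → Set Fn
  | 0 => {f | f = 0 ∨ ∃ n : ℕ, f = Finsupp.single n 1 ∨ f = Finsupp.single n (-1)}
  | (m + 1) => Kn F θ m ∪
      {f | ∃ (d : ℕ) (g : Fin d → Fn), (∀ i, g i ∈ Kn F θ m) ∧
            AdmissibleSeq F (fun i => (g i).support) ∧ f = θ • ∑ i, g i}

/-- The sets `K^M_m(F, θ)` generating the norming set of the modified Tsirelson space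
`T_M[F, θ]`. -/
def KMn (F : Set (Finset ℕ)) (θ : ℝ) : ℕ → Set Fn
  | 0 => {f | f = 0 ∨ ∃ n : ℕ, f = Finsupp.single n 1 ∨ f = Finsupp.single n (-1)}
  | (m + 1) => KMn F θ m ∪
      {f | ∃ (d : ℕ) (g : Fin d → Fn), (∀ i, g i ∈ KMn F θ m) ∧
            AllowableSeq F (fun i => (g i).support) ∧ f = θ • ∑ i, g i}

/-- The norming set `K(F, θ) = ⋃_m K_m(F, θ)` of `T[F, θ]`. -/
def Kfull (F : Set (Finset ℕ)) (θ : ℝ) : Set Fn := ⋃ m : ℕ, Kn F θ m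

/-- The norming set `K^M(F, θ) = ⋃_m K^M_m(F, θ)` of `T_M[F, θ]`. -/
def KMfull (F : Set (Finset ℕ)) (θ : ℝ) : Set Fn := ⋃ m : ℕ, KMn F θ m

/-- The Tsirelson norm `‖x‖_{F,θ} = sup {f*(x) : f* ∈ K(F,θ)}`. -/
noncomputable def tnorm (F : Set (Finset ℕ)) (θ : ℝ) (x : Fn) : ℝ :=
  sSup {r : ℝ | ∃ f ∈ Kfull F θ, r = pairF f x}

/-- The modified Tsirelson norm `‖x‖_{F,θ,M} = sup {f*(x) : f* ∈ K^M(F,θ)}`. -/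
noncomputable def tnormM (F : Set (Finset ℕ)) (θ : ℝ) (x : Fn) : ℝ :=
  sSup {r : ℝ | ∃ f ∈ KMfull F θ, r = pairF f x}

/-- `P_m(F, θ)`: the elements of `K_m(F, θ)` with nonnegative coefficients. -/
def Pn (F : Set (Finset ℕ)) (θ : ℝ) (m : ℕ) : Set Fn :=
  {f | f ∈ Kn F θ m ∧ ∀ n : ℕ, 0 ≤ f n}

/-- `P^M_m(F, θ)`: the elements of `K^M_m(F, θ)` with nonnegative coefficients. -/
def PMn (F : Set (Finset ℕ)) (θ : ℝ) (m : ℕ) : Set Fn :=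
  {f | f ∈ KMn F θ m ∧ ∀ n : ℕ, 0 ≤ f n}

/-- `1*_A = Σ_{s ∈ A} e*_s`. -/
def oneStar (A : Finset ℕ) : Fn := ∑ s ∈ A, Finsupp.single s (1 : ℝ)

/-- `{t(j) : t ∈ T terminal, |t| = j}`, the `j`-th level set of last entries of
terminal nodes of length `j`. -/
def levelSet (T : Finset (List ℕ)) (j : ℕ) : Finset ℕ :=
  (T.filter fun t => IsTerminal T t ∧ t.length = j).image fun t => t.getLast!

/-- The functional `Ψ(T)` associated to a tree `T`:  `Ψ(T) = e*_n` if `T = {(n)}` and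
`Ψ(T) = Σ_{j=2}^{ℓ} θ^{j-1} 1*_{{t(j) : t ∈ T terminal, |t| = j}}` if `|T| = ℓ ≥ 2`
(the single formula below, starting at `j = 1`, covers both cases, since for `ℓ ≥ 2`
no terminal node has length `1`). -/
noncomputable def Psi (θ : ℝ) (T : Finset (List ℕ)) : Fn :=
  ∑ j ∈ Finset.Icc 1 (treeLen T), θ ^ (j - 1) • oneStar (levelSet T j)

/-!
A tree of length at least two is the graft, below its root `(n)`, of the subtrees rooted at
the successors `(n, j)`, `j ∈ J`. Condition (T3) says `J ∈ F`, and (T4) (resp. (T5)) says that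
the supports of these subtrees, whose minima are the `j`, are pairwise disjoint (resp.
successive). As `Ψ` of a graft is `θ` times the sum of `Ψ` of the pieces, induction on the
length puts `Ψ(T)` in `P^M_{ℓ-1}` (resp. `P_{ℓ-1}`); conversely `θ(f_1 + ⋯ + f_d)` is `Ψ` of
the graft of trees realising the `f_i`. The level is exact because the deepest terminal node
gives `Ψ(T)` the coordinate `θ^{ℓ-1}`, whereas every nonzero coordinate of an element of
`K^M_m` has modulus at least `θ^m`.
-/

namespace List

variable {α : Type*}

theorem getLast!_cons_of_ne_nil [Inhabited α] {a : α} {l : List α} (h : l ≠ []) :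
    (a :: l).getLast! = l.getLast! := by
  obtain ⟨b, l, rfl⟩ := exists_cons_of_ne_nil h
  simp

theorem getLast?_eq_some_iff_getLast!_eq [Inhabited α] {l : List α} (h : l ≠ []) {a : α} :
    l.getLast? = some a ↔ l.getLast! = a := by
  simp [getLast?_eq_some_getLast h]

theorem Pairwise.le_getLast! [Inhabited α] [Preorder α] {l : List α}
    (hl : l.Pairwise (· ≤ ·)) {a : α} (ha : a ∈ l) : a ≤ l.getLast! := by
  simpa [getLast?_eq_some_getLast (ne_nil_of_mem ha)] using hl.rel_getLast ha

theorem eq_of_singleton_prefix {a b : α} {l : List α} (ha : [a] <+: l) (hb : [b] <+: l) :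
    a = b := by
  obtain ⟨u, rfl⟩ := ha
  obtain ⟨v, hv⟩ := hb
  simpa using (congrArg head? hv).symm

end List

theorem lexInc_cons_cons_s13 {n : ℕ} {s t : List ℕ} : LexInc (n :: s) (n :: t) ↔ LexInc s t := by
  simp [LexInc, List.cons_lex_cons_iff]

theorem LexInc.head_le {a b : ℕ} {s t : List ℕ} (h : LexInc (a :: s) (b :: t)) : a ≤ b := by
  rcases List.cons_lex_cons_iff.mp h.2.2 with h | ⟨rfl, -⟩ <;> omega

theorem lexInc_or_lexInc {s t : List ℕ} (hst : ¬ s <+: t) (hts : ¬ t <+: s) :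
    LexInc s t ∨ LexInc t s := by
  by_contra h
  simp only [LexInc, hst, hts, not_false_eq_true, true_and, not_or] at h
  exact hst (Std.Trichotomous.trichotomous s t h.1 h.2 ▸ List.prefix_refl s)

theorem lexInc_pair {n j j' : ℕ} (h : j < j') : LexInc [n, j] [n, j'] := by
  refine ⟨fun hp => ?_, fun hp => ?_, .cons (.rel h)⟩ <;>
    simpa [h.ne, h.ne'] using hp.eq_of_length rfl

def IsRoot (T : Finset (List ℕ)) (n : ℕ) : Prop := [n] ∈ T ∧ ∀ t ∈ T, [n] <+: t

section Trees

variable {F : Set (Finset ℕ)} {T : Finset (List ℕ)} {s t u : List ℕ} {n : ℕ}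

theorem length_le_treeLen (ht : t ∈ T) : t.length ≤ treeLen T := Finset.le_sup ht

theorem isTerminal_of_length_eq_treeLen (ht : t ∈ T) (hl : t.length = treeLen T) :
    IsTerminal T t :=
  ⟨ht, fun _ hu hpre => (hpre.eq_of_length_le (hl ▸ length_le_treeLen hu)).symm⟩

theorem nodeSupp_anti (h : s <+: t) : nodeSupp T t ⊆ nodeSupp T s :=
  fun _ ⟨u, hu, hpre, hterm, hlast⟩ => ⟨u, hu, h.trans hpre, hterm, hlast⟩

theorem IsRoot.eq_singleton_of_treeLen_eq_one (hr : IsRoot T n) (h1 : treeLen T = 1) :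
    T = {[n]} := by
  ext t
  refine ⟨fun ht => ?_, fun ht => Finset.mem_singleton.mp ht ▸ hr.1⟩
  have := length_le_treeLen ht
  exact Finset.mem_singleton.mpr ((hr.2 t ht).eq_of_length_le (by simpa [h1] using this)).symm

theorem IsRoot.ne_nil_of_mem (hr : IsRoot T n) (ht : t ∈ T) : t ≠ [] := by
  rintro rfl
  simpa using hr.2 [] ht

namespace IsAllowTree

theorem ne_nil (hT : IsAllowTree F T) (ht : t ∈ T) : t ≠ [] := (hT.nodes t ht).1

theorem one_le_treeLen (hT : IsAllowTree F T) : 1 ≤ treeLen T := by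
  obtain ⟨n, hn, -⟩ := hT.exroot
  simpa using length_le_treeLen hn

theorem exists_isTerminal_length_eq_treeLen (hT : IsAllowTree F T) :
    ∃ t, IsTerminal T t ∧ t.length = treeLen T := by
  obtain ⟨n, hn, -⟩ := hT.exroot
  obtain ⟨t, ht, hl⟩ := T.exists_mem_eq_sup ⟨_, hn⟩ List.length
  exact ⟨t, isTerminal_of_length_eq_treeLen ht hl.symm, hl.symm⟩

/-- Following the successors `(t, t(|t|))` of (T3) from `t` ends in a terminal node. -/
theorem exists_isTerminal_getLast!_eq (hT : IsAllowTree F T) {t : List ℕ} (ht : t ∈ T) :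
    ∃ u, IsTerminal T u ∧ t <+: u ∧ u.getLast! = t.getLast! := by
  by_cases hterm : IsTerminal T t
  · exact ⟨t, hterm, List.prefix_refl t, rfl⟩
  · have ht' := (hT.extend t ht hterm).1
    obtain ⟨u, hu, hpre, hlast⟩ := hT.exists_isTerminal_getLast!_eq ht'
    exact ⟨u, hu, (List.prefix_append _ _).trans hpre, hlast.trans (by simp)⟩
termination_by treeLen T - t.length
decreasing_by
  have := length_le_treeLen ht'
  simp only [List.length_append, List.length_singleton] at this ⊢
  omega

theorem mem_nodeSupp_iff (hT : IsAllowTree F T) {m : ℕ} :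
    m ∈ nodeSupp T s ↔ ∃ t, IsTerminal T t ∧ s <+: t ∧ t.getLast! = m := by
  constructor
  · rintro ⟨t, ht, hpre, hterm, hlast⟩
    exact ⟨t, hterm, hpre, (List.getLast?_eq_some_iff_getLast!_eq (hT.ne_nil ht)).mp hlast⟩
  · rintro ⟨t, hterm, hpre, hlast⟩
    exact ⟨t, hterm.1, hpre, hterm,
      (List.getLast?_eq_some_iff_getLast!_eq (hT.ne_nil hterm.1)).mpr hlast⟩

theorem getLast!_mem_nodeSupp (hT : IsAllowTree F T) (ht : t ∈ T) :
    t.getLast! ∈ nodeSupp T t := by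
  obtain ⟨u, hu, hpre, hlast⟩ := hT.exists_isTerminal_getLast!_eq ht
  exact hT.mem_nodeSupp_iff.mpr ⟨u, hu, hpre, hlast⟩

theorem eq_of_getLast!_eq (hT : IsAllowTree F T) (ht : IsTerminal T t) (hu : IsTerminal T u)
    (h : t.getLast! = u.getLast!) : t = u := by
  by_contra hne
  have htu : ¬ t <+: u := fun hp => hne (ht.2 u hu.1 hp).symm
  have hut : ¬ u <+: t := fun hp => hne (hu.2 t ht.1 hp)
  have hmt := hT.getLast!_mem_nodeSupp ht.1
  have hmu := h ▸ hT.getLast!_mem_nodeSupp hu.1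
  rcases lexInc_or_lexInc htu hut with hl | hl
  · exact Set.disjoint_left.mp (hT.suppDisj t ht.1 u hu.1 hl) hmt hmu
  · exact Set.disjoint_left.mp (hT.suppDisj u hu.1 t ht.1 hl) hmu hmt

theorem le_of_mem_nodeSupp (hT : IsAllowTree F T) {a m : ℕ} (ha : a ∈ s)
    (hm : m ∈ nodeSupp T s) : a ≤ m := by
  obtain ⟨u, hu, hpre, rfl⟩ := hT.mem_nodeSupp_iff.mp hm
  exact (hT.nodes u hu.1).2.le_getLast! (hpre.subset ha)

theorem not_isTerminal_root (hT : IsAllowTree F T) (hr : IsRoot T n) (h2 : 2 ≤ treeLen T) :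
    ¬ IsTerminal T [n] := by
  intro hterm
  obtain ⟨t, ht, hl⟩ := hT.exists_isTerminal_length_eq_treeLen
  have := congrArg List.length (hterm.2 t ht.1 (hr.2 t ht.1))
  simp only [List.length_singleton] at this
  omega

end IsAllowTree

theorem isAllowTree_singleton (n : ℕ) : IsAllowTree F {[n]} where
  nodes t ht := by simp_all
  downward t ht s hs hpre := by
    rw [Finset.mem_singleton] at ht ⊢
    subst ht
    exact hpre.eq_of_length_le (List.length_pos_iff.mpr hs)
  exroot := ⟨n, by simp, fun t ht => by simp_all⟩
  extend t ht hterm := absurd ⟨ht, fun u hu _ => by simp_all⟩ hterm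
  suppDisj s hs t ht hl := by simp_all [LexInc]

theorem isAdmTree_singleton (n : ℕ) : IsAdmTree F {[n]} :=
  ⟨isAllowTree_singleton n, fun s hs t ht hl => by simp_all [LexInc]⟩

theorem treeLen_singleton (n : ℕ) : treeLen {[n]} = 1 := by simp [treeLen]

end Trees

section Psi

variable {F : Set (Finset ℕ)} {θ : ℝ} {T : Finset (List ℕ)} {t : List ℕ} {n m : ℕ}

theorem mem_levelSet {j : ℕ} :
    m ∈ levelSet T j ↔ ∃ t, IsTerminal T t ∧ t.length = j ∧ t.getLast! = m := by
  simp only [levelSet, Finset.mem_image, Finset.mem_filter]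
  exact ⟨fun ⟨t, ⟨_, h⟩, hm⟩ => ⟨t, h.1, h.2, hm⟩, fun ⟨t, h, hl, hm⟩ => ⟨t, ⟨h.1, h, hl⟩, hm⟩⟩

theorem Psi_apply (θ : ℝ) (T : Finset (List ℕ)) (m : ℕ) :
    Psi θ T m = ∑ j ∈ Finset.Icc 1 (treeLen T), if m ∈ levelSet T j then θ ^ (j - 1) else 0 := by
  simp [Psi, oneStar, Finsupp.finsetSum_apply, Finsupp.single_apply]

theorem Psi_apply_eq_zero (h : ∀ t, IsTerminal T t → t.getLast! ≠ m) : Psi θ T m = 0 := by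
  rw [Psi_apply]
  refine Finset.sum_eq_zero fun j _ => if_neg fun hm => ?_
  obtain ⟨t, ht, -, hlast⟩ := mem_levelSet.mp hm
  exact h t ht hlast

theorem Psi_nonneg (hθ : 0 ≤ θ) (T : Finset (List ℕ)) (m : ℕ) : 0 ≤ Psi θ T m := by
  rw [Psi_apply]
  exact Finset.sum_nonneg fun j _ => by split_ifs <;> positivity

theorem Psi_singleton (θ : ℝ) (n : ℕ) : Psi θ {[n]} = Finsupp.single n 1 := by
  have hlevel : levelSet {[n]} 1 = {n} := by
    ext m
    simp only [mem_levelSet, Finset.mem_singleton, IsTerminal]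
    constructor
    · rintro ⟨t, ⟨rfl, -⟩, -, rfl⟩
      simp
    · intro hm
      exact ⟨[n], ⟨rfl, fun u hu _ => hu⟩, rfl, by simp [hm]⟩
  simp [Psi, treeLen_singleton, hlevel, oneStar]

namespace IsAllowTree

theorem Psi_apply_getLast! (hT : IsAllowTree F T) (ht : IsTerminal T t) :
    Psi θ T t.getLast! = θ ^ (t.length - 1) := by
  have hmem : t.length ∈ Finset.Icc 1 (treeLen T) := Finset.mem_Icc.mpr
    ⟨List.length_pos_iff.mpr (hT.ne_nil ht.1), length_le_treeLen ht.1⟩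
  rw [Psi_apply, Finset.sum_eq_single_of_mem _ hmem fun j _ hj => if_neg fun h => ?_,
    if_pos (mem_levelSet.mpr ⟨t, ht, rfl, rfl⟩)]
  obtain ⟨u, hu, rfl, hlast⟩ := mem_levelSet.mp h
  exact hj (congrArg List.length (hT.eq_of_getLast!_eq hu ht hlast))

theorem mem_support_Psi_iff (hT : IsAllowTree F T) (hθ : 0 < θ) :
    m ∈ (Psi θ T).support ↔ ∃ t, IsTerminal T t ∧ t.getLast! = m := by
  rw [Finsupp.mem_support_iff]
  constructor
  · intro hm
    by_contra! h
    exact hm (Psi_apply_eq_zero h)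
  · rintro ⟨t, ht, rfl⟩
    rw [hT.Psi_apply_getLast! ht]
    positivity

theorem coe_support_Psi (hT : IsAllowTree F T) (hθ : 0 < θ) (hr : IsRoot T n) :
    ((Psi θ T).support : Set ℕ) = nodeSupp T [n] := by
  ext m
  rw [Finset.mem_coe, hT.mem_support_Psi_iff hθ, hT.mem_nodeSupp_iff]
  exact ⟨fun ⟨t, ht, hm⟩ => ⟨t, ht, hr.2 t ht.1, hm⟩, fun ⟨t, ht, _, hm⟩ => ⟨t, ht, hm⟩⟩

theorem root_mem_support_Psi (hT : IsAllowTree F T) (hθ : 0 < θ) (hr : IsRoot T n) :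
    n ∈ (Psi θ T).support := by
  rw [← Finset.mem_coe, hT.coe_support_Psi hθ hr]
  simpa using hT.getLast!_mem_nodeSupp hr.1

theorem sMin_support_Psi (hT : IsAllowTree F T) (hθ : 0 < θ) (hr : IsRoot T n) :
    sMin (Psi θ T).support = n := by
  have hsupp := hT.coe_support_Psi hθ hr
  have hn : n ∈ ((Psi θ T).support : Set ℕ) := hT.root_mem_support_Psi hθ hr
  exact le_antisymm (Nat.sInf_le hn)
    (le_csInf ⟨n, hn⟩ fun m hm => hT.le_of_mem_nodeSupp (List.mem_singleton_self n) (hsupp ▸ hm))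

theorem isRoot_sMin_support_Psi (hT : IsAllowTree F T) (hθ : 0 < θ) :
    IsRoot T (sMin (Psi θ T).support) := by
  obtain ⟨n, hr⟩ := hT.exroot
  rwa [hT.sMin_support_Psi hθ hr]

theorem exists_Psi_apply_eq_pow (hT : IsAllowTree F T) :
    ∃ k, Psi θ T k = θ ^ (treeLen T - 1) := by
  obtain ⟨t, ht, hl⟩ := hT.exists_isTerminal_length_eq_treeLen
  exact ⟨t.getLast!, by rw [hT.Psi_apply_getLast! ht, hl]⟩

theorem Psi_ne_zero (hT : IsAllowTree F T) (hθ : 0 < θ) : Psi θ T ≠ 0 := by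
  obtain ⟨k, hk⟩ := hT.exists_Psi_apply_eq_pow (θ := θ)
  exact fun h => (pow_pos hθ _).ne' (hk ▸ DFunLike.congr_fun h k)

end IsAllowTree

end Psi

section NormingSets

variable {F : Set (Finset ℕ)} {θ : ℝ} {m : ℕ} {f : Fn}

theorem KMn_mono : Monotone (KMn F θ) :=
  monotone_nat_of_le_succ fun _ => Set.subset_union_left

theorem Kn_mono : Monotone (Kn F θ) :=
  monotone_nat_of_le_succ fun _ => Set.subset_union_left

theorem AdmissibleSeq.allowableSeq {d : ℕ} {E : Fin d → Finset ℕ} (h : AdmissibleSeq F E) :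
    AllowableSeq F E := by
  obtain ⟨hne, hlt, hF⟩ := h
  refine ⟨hne, fun i j hij => Finset.disjoint_left.mpr fun a hai haj => ?_, hF⟩
  rcases hij.lt_or_gt with h | h
  · exact lt_irrefl a (hlt i j h a hai a haj)
  · exact lt_irrefl a (hlt j i h a haj a hai)

theorem Kn_subset_KMn : ∀ m, Kn F θ m ⊆ KMn F θ m
  | 0 => subset_rfl
  | m + 1 => Set.union_subset_union (Kn_subset_KMn m)
      fun _ ⟨d, g, hg, hadm, hf⟩ => ⟨d, g, fun i => Kn_subset_KMn m (hg i), hadm.allowableSeq, hf⟩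

theorem eq_single_of_mem_KMn_zero (hf : f ∈ KMn F θ 0) (hpos : ∀ n, 0 ≤ f n) (hf0 : f ≠ 0) :
    ∃ n, f = Finsupp.single n 1 := by
  rcases hf with rfl | ⟨n, rfl | rfl⟩
  · exact absurd rfl hf0
  · exact ⟨n, rfl⟩
  · exact absurd (hpos n) (by simp)

theorem sum_apply_of_mem_support {ι : Type*} [Fintype ι] {g : ι → Fn}
    (hdisj : ∀ i j, i ≠ j → Disjoint (g i).support (g j).support) {i : ι} {n : ℕ}
    (hn : n ∈ (g i).support) : (∑ j, g j) n = g i n := by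
  rw [Finsupp.finsetSum_apply, Finset.sum_eq_single i (fun j _ hji => ?_) (by simp)]
  exact Finsupp.notMem_support_iff.mp fun hj => Finset.disjoint_left.mp (hdisj j i hji) hj hn

theorem pow_le_abs_apply_of_mem_KMn (hθ0 : 0 ≤ θ) (hθ1 : θ ≤ 1) (hf : f ∈ KMn F θ m) {n : ℕ}
    (hn : f n ≠ 0) : θ ^ m ≤ |f n| := by
  induction m generalizing f with
  | zero =>
    rcases hf with rfl | ⟨k, rfl | rfl⟩
    · exact absurd rfl hn
    all_goals
      obtain rfl : k = n := by by_contra h; simp [h] at hn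
      simp
  | succ m ih =>
    rcases hf with hf | ⟨d, g, hg, ⟨-, hdisj, -⟩, rfl⟩
    · exact (pow_le_pow_of_le_one hθ0 hθ1 m.le_succ).trans (ih hf hn)
    obtain ⟨i, -, hi⟩ := Finset.exists_ne_zero_of_sum_ne_zero
      (by simpa [Finsupp.finsetSum_apply] using right_ne_zero_of_mul hn)
    rw [Finsupp.smul_apply, sum_apply_of_mem_support hdisj (Finsupp.mem_support_iff.mpr hi),
      smul_eq_mul, abs_mul, abs_of_nonneg hθ0, pow_succ']
    exact mul_le_mul_of_nonneg_left (ih (hg i) hi) hθ0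

theorem pow_le_abs_apply_of_mem_Kn (hθ0 : 0 ≤ θ) (hθ1 : θ ≤ 1) (hf : f ∈ Kn F θ m) {n : ℕ}
    (hn : f n ≠ 0) : θ ^ m ≤ |f n| :=
  pow_le_abs_apply_of_mem_KMn hθ0 hθ1 (Kn_subset_KMn m hf) hn

end NormingSets

section Graft

variable {F : Set (Finset ℕ)} {θ : ℝ} {ι : Type*} {Ts : ι → Finset (List ℕ)}
  {r : ι → ℕ} {n : ℕ} {s t : List ℕ} {i j : ι}

theorem eq_of_mem_of_prefix (hroot : ∀ i, IsRoot (Ts i) (r i)) (hr : Function.Injective r)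
    (hs : s ∈ Ts i) (ht : t ∈ Ts j) (hst : s <+: t) : i = j :=
  hr (List.eq_of_singleton_prefix (((hroot i).2 s hs).trans hst) ((hroot j).2 t ht))

theorem lt_of_lexInc_of_mem (hroot : ∀ i, IsRoot (Ts i) (r i)) (hr : Function.Injective r)
    (hs : s ∈ Ts i) (ht : t ∈ Ts j) (hij : i ≠ j) (h : LexInc s t) : r i < r j := by
  obtain ⟨s', rfl⟩ := (hroot i).2 s hs
  obtain ⟨t', rfl⟩ := (hroot j).2 t ht
  exact lt_of_le_of_ne h.head_le (hr.ne hij)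

variable [Fintype ι]

def graft (n : ℕ) (Ts : ι → Finset (List ℕ)) : Finset (List ℕ) :=
  insert [n] (Finset.univ.biUnion fun i => (Ts i).image (n :: ·))

theorem mem_graft : s ∈ graft n Ts ↔ s = [n] ∨ ∃ i, ∃ t ∈ Ts i, s = n :: t := by
  simp [graft, eq_comm]

theorem cons_mem_graft (ht : t ≠ []) : n :: t ∈ graft n Ts ↔ ∃ i, t ∈ Ts i := by
  simp [mem_graft, ht]

theorem cons_mem_graft_of_mem (ht : t ∈ Ts i) : n :: t ∈ graft n Ts :=
  mem_graft.mpr (Or.inr ⟨i, t, ht, rfl⟩)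

theorem root_prefix_of_mem_graft (hs : s ∈ graft n Ts) : [n] <+: s := by
  rcases mem_graft.mp hs with rfl | ⟨i, t, -, rfl⟩
  · exact List.prefix_refl _
  · exact List.cons_prefix_cons.mpr ⟨rfl, List.nil_prefix⟩

theorem isTerminal_graft_cons_iff (hroot : ∀ i, IsRoot (Ts i) (r i)) (hr : Function.Injective r)
    (ht : t ∈ Ts i) : IsTerminal (graft n Ts) (n :: t) ↔ IsTerminal (Ts i) t := by
  have hne := (hroot _).ne_nil_of_mem ht
  constructor
  · refine fun ⟨_, hmax⟩ => ⟨ht, fun u hu hpre => ?_⟩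
    have := hmax (n :: u) (cons_mem_graft_of_mem hu)
      (List.cons_prefix_cons.mpr ⟨rfl, hpre⟩)
    exact List.cons_injective this
  · refine fun ⟨_, hmax⟩ => ⟨cons_mem_graft_of_mem ht, fun u hu hpre => ?_⟩
    rcases mem_graft.mp hu with rfl | ⟨j, u, hu', rfl⟩
    · simpa [hne] using hpre.length_le
    · have hpre := (List.cons_prefix_cons.mp hpre).2
      obtain rfl := eq_of_mem_of_prefix hroot hr ht hu' hpre
      rw [hmax u hu' hpre]

theorem nodeSupp_graft_cons (hroot : ∀ i, IsRoot (Ts i) (r i)) (hr : Function.Injective r)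
    (ht : t ∈ Ts i) : nodeSupp (graft n Ts) (n :: t) = nodeSupp (Ts i) t := by
  ext m
  constructor
  · rintro ⟨u', hu', hpre, hterm, hlast⟩
    rcases mem_graft.mp hu' with rfl | ⟨j, u, hu, rfl⟩
    · simpa [(hroot _).ne_nil_of_mem ht] using hpre.length_le
    have hpre := (List.cons_prefix_cons.mp hpre).2
    obtain rfl := eq_of_mem_of_prefix hroot hr ht hu hpre
    exact ⟨u, hu, hpre, (isTerminal_graft_cons_iff hroot hr hu).mp hterm,
      List.getLast?_cons_of_ne_nil ((hroot _).ne_nil_of_mem hu) ▸ hlast⟩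
  · rintro ⟨u, hu, hpre, hterm, hlast⟩
    have hne := (hroot _).ne_nil_of_mem hu
    exact ⟨n :: u, cons_mem_graft_of_mem hu, List.cons_prefix_cons.mpr ⟨rfl, hpre⟩,
      (isTerminal_graft_cons_iff hroot hr hu).mpr hterm,
      (List.getLast?_cons_of_ne_nil hne).trans hlast⟩

theorem treeLen_graft_le {m : ℕ} (h : ∀ i, treeLen (Ts i) ≤ m) :
    treeLen (graft n Ts) ≤ m + 1 := by
  refine Finset.sup_le fun s hs => ?_
  rcases mem_graft.mp hs with rfl | ⟨i, t, ht, rfl⟩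
  · simp
  · simpa using (length_le_treeLen ht).trans (h i)

theorem treeLen_lt_treeLen_graft (i : ι) : treeLen (Ts i) < treeLen (graft n Ts) := by
  have h1 : 1 ≤ treeLen (graft n Ts) := length_le_treeLen (t := [n]) (mem_graft.mpr (Or.inl rfl))
  have h2 : treeLen (Ts i) ≤ treeLen (graft n Ts) - 1 := Finset.sup_le fun t ht => by
    have := length_le_treeLen (cons_mem_graft_of_mem (n := n) ht)
    simp only [List.length_cons] at this
    omega
  omega

theorem exists_of_lexInc_graft (hs : s ∈ graft n Ts) (ht : t ∈ graft n Ts) (h : LexInc s t) :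
    ∃ i s₀ j t₀, s₀ ∈ Ts i ∧ t₀ ∈ Ts j ∧ s = n :: s₀ ∧ t = n :: t₀ ∧ LexInc s₀ t₀ := by
  rcases mem_graft.mp hs with rfl | ⟨i, s₀, hs₀, rfl⟩
  · exact absurd (root_prefix_of_mem_graft ht) h.1
  rcases mem_graft.mp ht with rfl | ⟨j, t₀, ht₀, rfl⟩
  · exact absurd (root_prefix_of_mem_graft hs) h.2.1
  exact ⟨i, s₀, j, t₀, hs₀, ht₀, rfl, rfl, lexInc_cons_cons_s13.mp h⟩

theorem cons_append_mem_graft_iff (hroot : ∀ i, IsRoot (Ts i) (r i)) (hr : Function.Injective r)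
    (ht : t ∈ Ts i) {a : ℕ} : (n :: t) ++ [a] ∈ graft n Ts ↔ t ++ [a] ∈ Ts i := by
  rw [List.cons_append, cons_mem_graft (by simp)]
  exact ⟨fun ⟨j, hj⟩ => eq_of_mem_of_prefix hroot hr ht hj (List.prefix_append _ _) ▸ hj,
    fun h => ⟨i, h⟩⟩

theorem isAllowTree_graft (hTs : ∀ i, IsAllowTree F (Ts i)) (hroot : ∀ i, IsRoot (Ts i) (r i))
    (hr : Function.Injective r) (hn : ∃ i, r i = n) (hle : ∀ i, n ≤ r i)
    (hF : Finset.univ.image r ∈ F)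
    (hdisj : ∀ i j, i ≠ j → Disjoint (nodeSupp (Ts i) [r i]) (nodeSupp (Ts j) [r j])) :
    IsAllowTree F (graft n Ts) where
  nodes s hs := by
    rcases mem_graft.mp hs with rfl | ⟨i, t, ht, rfl⟩
    · simp
    obtain ⟨t', rfl⟩ := (hroot i).2 t ht
    have hsorted := ((hTs i).nodes _ ht).2
    refine ⟨by simp, List.pairwise_cons.mpr ⟨fun b hb => ?_, hsorted⟩⟩
    rcases List.mem_cons.mp hb with rfl | hb
    · exact hle i
    · exact (hle i).trans (List.pairwise_cons.mp hsorted |>.1 b hb)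
  downward s hs u hu hpre := by
    rcases mem_graft.mp hs with rfl | ⟨i, t, ht, rfl⟩
    · rwa [hpre.eq_of_length_le (List.length_pos_iff.mpr hu)]
    obtain ⟨a, u, rfl⟩ := List.exists_cons_of_ne_nil hu
    obtain ⟨rfl, hut⟩ := List.cons_prefix_cons.mp hpre
    rcases eq_or_ne u [] with rfl | hu
    · exact mem_graft.mpr (Or.inl rfl)
    · exact (cons_mem_graft hu).mpr ⟨i, (hTs i).downward t ht u hu hut⟩
  exroot := ⟨n, mem_graft.mpr (Or.inl rfl), fun _ => root_prefix_of_mem_graft⟩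
  extend s hs hterm := by
    rcases mem_graft.mp hs with rfl | ⟨i, t, ht, rfl⟩
    · obtain ⟨i, rfl⟩ := hn
      refine ⟨(cons_mem_graft (by simp)).mpr ⟨i, by simpa using (hroot i).1⟩,
        Finset.univ.image r, fun j => ?_, hF⟩
      simp only [Finset.mem_image, Finset.mem_univ, true_and, List.singleton_append,
        cons_mem_graft (List.cons_ne_nil j [])]
      exact ⟨fun ⟨i, hi⟩ => ⟨i, hi ▸ (hroot i).1⟩,
        fun ⟨i, hi⟩ => ⟨i, List.eq_of_singleton_prefix ((hroot i).2 _ hi) (List.prefix_refl _)⟩⟩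
    · have hterm' := mt (isTerminal_graft_cons_iff hroot hr ht).mpr hterm
      obtain ⟨hext, J, hJ, hJF⟩ := (hTs i).extend t ht hterm'
      rw [List.getLast!_cons_of_ne_nil ((hroot _).ne_nil_of_mem ht),
        cons_append_mem_graft_iff hroot hr ht]
      exact ⟨hext, J, fun j => (hJ j).trans (cons_append_mem_graft_iff hroot hr ht).symm, hJF⟩
  suppDisj s hs t ht hl := by
    obtain ⟨i, s₀, j, t₀, hs₀, ht₀, rfl, rfl, hl₀⟩ := exists_of_lexInc_graft hs ht hl
    rw [nodeSupp_graft_cons hroot hr hs₀, nodeSupp_graft_cons hroot hr ht₀]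
    rcases eq_or_ne i j with rfl | hij
    · exact (hTs i).suppDisj _ hs₀ _ ht₀ hl₀
    · exact (hdisj i j hij).mono (nodeSupp_anti ((hroot i).2 _ hs₀))
        (nodeSupp_anti ((hroot j).2 _ ht₀))

theorem isAdmTree_graft (hTs : ∀ i, IsAdmTree F (Ts i)) (hroot : ∀ i, IsRoot (Ts i) (r i))
    (hr : Function.Injective r) (hn : ∃ i, r i = n) (hle : ∀ i, n ≤ r i)
    (hF : Finset.univ.image r ∈ F)
    (hlt : ∀ i j, r i < r j → setLT (nodeSupp (Ts i) [r i]) (nodeSupp (Ts j) [r j])) :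
    IsAdmTree F (graft n Ts) := by
  have hdisj : ∀ i j, i ≠ j → Disjoint (nodeSupp (Ts i) [r i]) (nodeSupp (Ts j) [r j]) := by
    intro i j hij
    refine Set.disjoint_left.mpr fun a hai haj => ?_
    rcases (hr.ne hij).lt_or_gt with h | h
    · exact lt_irrefl a (hlt i j h a hai a haj)
    · exact lt_irrefl a (hlt j i h a haj a hai)
  refine ⟨isAllowTree_graft (fun i => (hTs i).1) hroot hr hn hle hF hdisj, fun s hs t ht hl => ?_⟩
  obtain ⟨i, s₀, j, t₀, hs₀, ht₀, rfl, rfl, hl₀⟩ := exists_of_lexInc_graft hs ht hl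
  rw [nodeSupp_graft_cons hroot hr hs₀, nodeSupp_graft_cons hroot hr ht₀]
  rcases eq_or_ne i j with rfl | hij
  · exact (hTs i).2 _ hs₀ _ ht₀ hl₀
  · exact fun a ha b hb => hlt i j (lt_of_lexInc_of_mem hroot hr hs₀ ht₀ hij hl₀)
      a (nodeSupp_anti ((hroot i).2 _ hs₀) ha) b (nodeSupp_anti ((hroot j).2 _ ht₀) hb)

namespace IsAllowTree

variable (hT : IsAllowTree F (graft n Ts)) (hroot : ∀ i, IsRoot (Ts i) (r i))
  (hr : Function.Injective r)
include hT hroot hr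

theorem of_graft (i : ι) : IsAllowTree F (Ts i) where
  nodes t ht := ⟨(hroot _).ne_nil_of_mem ht,
    (List.pairwise_cons.mp (hT.nodes _ (cons_mem_graft_of_mem ht)).2).2⟩
  downward t ht s hs hpre := by
    obtain ⟨j, hj⟩ := (cons_mem_graft hs).mp <| hT.downward _
      (cons_mem_graft_of_mem ht) _ (List.cons_ne_nil _ _)
      (List.cons_prefix_cons.mpr ⟨rfl, hpre⟩)
    exact eq_of_mem_of_prefix hroot hr hj ht hpre ▸ hj
  exroot := ⟨r i, hroot i⟩
  extend t ht hterm := by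
    obtain ⟨hext, J, hJ, hJF⟩ := hT.extend _ (cons_mem_graft_of_mem ht)
      (mt (isTerminal_graft_cons_iff hroot hr ht).mp hterm)
    rw [List.getLast!_cons_of_ne_nil ((hroot _).ne_nil_of_mem ht),
      cons_append_mem_graft_iff hroot hr ht] at hext
    exact ⟨hext, J, fun j => (hJ j).trans (cons_append_mem_graft_iff hroot hr ht), hJF⟩
  suppDisj s hs t ht hl := by
    rw [← nodeSupp_graft_cons (n := n) hroot hr hs, ← nodeSupp_graft_cons (n := n) hroot hr ht]
    exact hT.suppDisj _ (cons_mem_graft_of_mem hs)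
      _ (cons_mem_graft_of_mem ht) (lexInc_cons_cons_s13.mpr hl)

theorem disjoint_nodeSupp_of_graft (hij : i ≠ j) :
    Disjoint (nodeSupp (Ts i) [r i]) (nodeSupp (Ts j) [r j]) := by
  have hi := (hroot i).1
  have hj := (hroot j).1
  rw [← nodeSupp_graft_cons (n := n) hroot hr hi, ← nodeSupp_graft_cons (n := n) hroot hr hj]
  rcases (hr.ne hij).lt_or_gt with h | h
  · exact hT.suppDisj _ (cons_mem_graft_of_mem hi) _ (cons_mem_graft_of_mem hj) (lexInc_pair h)
  · exact (hT.suppDisj _ (cons_mem_graft_of_mem hj) _ (cons_mem_graft_of_mem hi)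
      (lexInc_pair h)).symm

theorem Psi_graft [Nonempty ι] : Psi θ (graft n Ts) = θ • ∑ i, Psi θ (Ts i) := by
  ext m
  rw [Finsupp.smul_apply, Finsupp.finsetSum_apply, smul_eq_mul]
  by_cases hm : ∃ i t, IsTerminal (Ts i) t ∧ t.getLast! = m
  · obtain ⟨i, t, ht, rfl⟩ := hm
    have hne := (hroot _).ne_nil_of_mem ht.1
    have ht' := (isTerminal_graft_cons_iff (n := n) hroot hr ht.1).mpr ht
    have hother : ∀ j ≠ i, Psi θ (Ts j) t.getLast! = 0 := by
      refine fun j hji => Psi_apply_eq_zero fun u hu hlast => hji ?_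
      have hu' := (isTerminal_graft_cons_iff (n := n) hroot hr hu.1).mpr hu
      have hut : n :: u = n :: t := hT.eq_of_getLast!_eq hu' ht' (by
        rw [List.getLast!_cons_of_ne_nil ((hroot _).ne_nil_of_mem hu.1),
          List.getLast!_cons_of_ne_nil hne, hlast])
      exact eq_of_mem_of_prefix hroot hr hu.1 ht.1 (List.cons_injective hut ▸ List.prefix_refl u)
    rw [← List.getLast!_cons_of_ne_nil (a := n) hne, hT.Psi_apply_getLast! ht',
      List.getLast!_cons_of_ne_nil hne, Finset.sum_eq_single i (fun j _ => hother j) (by simp),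
      (hT.of_graft hroot hr i).Psi_apply_getLast! ht, List.length_cons,
      Nat.add_sub_cancel, ← pow_succ', Nat.sub_add_cancel (List.length_pos_iff.mpr hne)]
  · push Not at hm
    rw [Finset.sum_eq_zero fun i _ => Psi_apply_eq_zero (hm i), mul_zero]
    refine Psi_apply_eq_zero fun s hs hlast => ?_
    rcases mem_graft.mp hs.1 with rfl | ⟨i, t, ht, rfl⟩
    · obtain ⟨i⟩ := ‹Nonempty ι›
      simpa using hs.2 _ (cons_mem_graft_of_mem (hroot i).1) (root_prefix_of_mem_graft
        (cons_mem_graft_of_mem (hroot i).1))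
    · exact hm i t ((isTerminal_graft_cons_iff hroot hr ht).mp hs)
        (by rwa [List.getLast!_cons_of_ne_nil ((hroot _).ne_nil_of_mem ht)] at hlast)

end IsAllowTree

namespace IsAdmTree

variable (hT : IsAdmTree F (graft n Ts)) (hroot : ∀ i, IsRoot (Ts i) (r i))
  (hr : Function.Injective r)
include hT hroot hr

theorem of_graft (i : ι) : IsAdmTree F (Ts i) := by
  refine ⟨hT.1.of_graft hroot hr i, fun s hs t ht hl => ?_⟩
  rw [← nodeSupp_graft_cons (n := n) hroot hr hs, ← nodeSupp_graft_cons (n := n) hroot hr ht]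
  exact hT.2 _ (cons_mem_graft_of_mem hs) _ (cons_mem_graft_of_mem ht) (lexInc_cons_cons_s13.mpr hl)

theorem setLT_nodeSupp_of_graft (hij : r i < r j) :
    setLT (nodeSupp (Ts i) [r i]) (nodeSupp (Ts j) [r j]) := by
  rw [← nodeSupp_graft_cons (n := n) hroot hr (hroot i).1,
    ← nodeSupp_graft_cons (n := n) hroot hr (hroot j).1]
  exact hT.2 _ (cons_mem_graft_of_mem (hroot i).1) _ (cons_mem_graft_of_mem (hroot j).1)
    (lexInc_pair hij)

end IsAdmTree

end Graft

section Decomposition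

variable {F : Set (Finset ℕ)} {T : Finset (List ℕ)}

def subtree (T : Finset (List ℕ)) (n j : ℕ) : Finset (List ℕ) :=
  (T.preimage (n :: ·) List.cons_injective.injOn).filter ([j] <+: ·)

theorem mem_subtree {n j : ℕ} {s : List ℕ} : s ∈ subtree T n j ↔ n :: s ∈ T ∧ [j] <+: s := by
  simp [subtree]

theorem IsAllowTree.exists_eq_graft (hT : IsAllowTree F T) (h2 : 2 ≤ treeLen T) :
    ∃ (d n : ℕ) (Ts : Fin d → Finset (List ℕ)) (r : Fin d → ℕ), 0 < d ∧ StrictMono r ∧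
      (∀ i, IsRoot (Ts i) (r i)) ∧ Finset.univ.image r ∈ F ∧ T = graft n Ts := by
  obtain ⟨n, hr⟩ := hT.exroot
  obtain ⟨hnn, J, hJ, hJF⟩ := hT.extend [n] hr.1 (hT.not_isTerminal_root hr h2)
  set e := J.orderEmbOfFin rfl
  have hroot : ∀ i, IsRoot (subtree T n (e i)) (e i) := fun i =>
    ⟨mem_subtree.mpr ⟨(hJ _).mp (J.orderEmbOfFin_mem rfl i), List.prefix_refl _⟩,
      fun s hs => (mem_subtree.mp hs).2⟩
  refine ⟨J.card, n, fun i => subtree T n (e i), e,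
    Finset.card_pos.mpr ⟨n, (hJ n).mpr (by simpa using hnn)⟩, e.strictMono, hroot,
    by simpa [e] using hJF, ?_⟩
  ext t
  rw [mem_graft]
  constructor
  · intro ht
    obtain ⟨s, rfl⟩ := hr.2 t ht
    rcases s with _ | ⟨j, s⟩
    · exact Or.inl rfl
    have hj : j ∈ Set.range e := by
      rw [J.range_orderEmbOfFin rfl]
      exact (hJ j).mpr (hT.downward _ ht [n, j] (by simp) (by simp))
    obtain ⟨i, rfl⟩ := hj
    exact Or.inr ⟨i, e i :: s, mem_subtree.mpr ⟨ht, by simp⟩, rfl⟩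
  · rintro (rfl | ⟨i, s, hs, rfl⟩)
    · exact hr.1
    · exact (mem_subtree.mp hs).1

end Decomposition

section Realization

variable {F : Set (Finset ℕ)} {θ : ℝ} {m : ℕ}

theorem Psi_mem_KMn (hθ : 0 < θ) {T : Finset (List ℕ)} (hT : IsAllowTree F T)
    (hlen : treeLen T ≤ m + 1) : Psi θ T ∈ KMn F θ m := by
  induction m generalizing T with
  | zero =>
    obtain ⟨n, hr⟩ := hT.exroot
    rw [IsRoot.eq_singleton_of_treeLen_eq_one hr (le_antisymm hlen hT.one_le_treeLen),
      Psi_singleton]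
    exact Or.inr ⟨n, Or.inl rfl⟩
  | succ m ih =>
    rcases le_or_gt (treeLen T) (m + 1) with hlen' | h2
    · exact KMn_mono m.le_succ (ih hT hlen')
    obtain ⟨d, n, Ts, r, hd, hr, hroot, hF, rfl⟩ := hT.exists_eq_graft (by omega)
    have : Nonempty (Fin d) := ⟨⟨0, hd⟩⟩
    have hTs := hT.of_graft hroot hr.injective
    have hsupp i := (hTs i).coe_support_Psi hθ (hroot i)
    refine Or.inr ⟨d, fun i => Psi θ (Ts i), fun i => ih (hTs i) ?_,
      ⟨fun i => ⟨r i, (hTs i).root_mem_support_Psi hθ (hroot i)⟩, fun i j hij => ?_, ?_⟩,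
      hT.Psi_graft hroot hr.injective⟩
    · have := treeLen_lt_treeLen_graft (n := n) (Ts := Ts) i
      omega
    · rw [← Finset.disjoint_coe, hsupp i, hsupp j]
      exact hT.disjoint_nodeSupp_of_graft hroot hr.injective hij
    · simpa [(hTs _).sMin_support_Psi hθ (hroot _)] using hF

theorem Psi_mem_Kn (hθ : 0 < θ) {T : Finset (List ℕ)} (hT : IsAdmTree F T)
    (hlen : treeLen T ≤ m + 1) : Psi θ T ∈ Kn F θ m := by
  induction m generalizing T with
  | zero =>
    obtain ⟨n, hr⟩ := hT.1.exroot
    rw [IsRoot.eq_singleton_of_treeLen_eq_one hr (le_antisymm hlen hT.1.one_le_treeLen),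
      Psi_singleton]
    exact Or.inr ⟨n, Or.inl rfl⟩
  | succ m ih =>
    rcases le_or_gt (treeLen T) (m + 1) with hlen' | h2
    · exact Kn_mono m.le_succ (ih hT hlen')
    obtain ⟨d, n, Ts, r, hd, hr, hroot, hF, rfl⟩ := hT.1.exists_eq_graft (by omega)
    have : Nonempty (Fin d) := ⟨⟨0, hd⟩⟩
    have hTs := hT.of_graft hroot hr.injective
    have hsupp i := (hTs i).1.coe_support_Psi hθ (hroot i)
    refine Or.inr ⟨d, fun i => Psi θ (Ts i), fun i => ih (hTs i) ?_,
      ⟨fun i => ⟨r i, (hTs i).1.root_mem_support_Psi hθ (hroot i)⟩, fun i j hij => ?_, ?_⟩,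
      hT.1.Psi_graft hroot hr.injective⟩
    · have := treeLen_lt_treeLen_graft (n := n) (Ts := Ts) i
      omega
    · intro a ha b hb
      rw [← Finset.mem_coe, hsupp] at ha hb
      exact hT.setLT_nodeSupp_of_graft hroot hr.injective (hr hij) a ha b hb
    · simpa [(hTs _).1.sMin_support_Psi hθ (hroot _)] using hF

theorem nonneg_of_smul_sum_nonneg {ι : Type*} [Fintype ι] {g : ι → Fn} (hθ : 0 < θ)
    (hdisj : ∀ i j, i ≠ j → Disjoint (g i).support (g j).support)
    (hpos : ∀ n, 0 ≤ (θ • ∑ i, g i) n) (i : ι) (n : ℕ) : 0 ≤ g i n := by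
  by_cases hn : n ∈ (g i).support
  · have := hpos n
    rw [Finsupp.smul_apply, sum_apply_of_mem_support hdisj hn, smul_eq_mul] at this
    exact nonneg_of_mul_nonneg_right this hθ
  · rw [Finsupp.notMem_support_iff.mp hn]

/-- The root of the graft is the least of the roots `min supp (g i)` of the pieces. -/
theorem exists_graft_of_allowableSeq (hθ : 0 < θ) {d : ℕ} (hd : 0 < d)
    {Ts : Fin d → Finset (List ℕ)} {g : Fin d → Fn} (hTs : ∀ i, IsAllowTree F (Ts i))
    (hg : ∀ i, Psi θ (Ts i) = g i) (hseq : AllowableSeq F fun i => (g i).support) :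
    ∃ n, IsAllowTree F (graft n Ts) ∧ Psi θ (graft n Ts) = θ • ∑ i, g i ∧
      ((∀ i, IsAdmTree F (Ts i)) → AdmissibleSeq F (fun i => (g i).support) →
        IsAdmTree F (graft n Ts)) := by
  obtain ⟨-, hdisj, hF⟩ := hseq
  set r := fun i => sMin (g i).support
  have hroot : ∀ i, IsRoot (Ts i) (r i) := fun i => by
    simpa only [r, hg i] using (hTs i).isRoot_sMin_support_Psi hθ
  have hsupp : ∀ i, nodeSupp (Ts i) [r i] = (g i).support := fun i => by
    rw [← (hTs i).coe_support_Psi hθ (hroot i), hg i]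
  have hmem : ∀ i, r i ∈ (g i).support := fun i => hg i ▸ (hTs i).root_mem_support_Psi hθ (hroot i)
  have hr : Function.Injective r := fun i j hij => by
    by_contra h
    exact Finset.disjoint_left.mp (hdisj i j h) (hmem i) (hij ▸ hmem j)
  obtain ⟨i₀, -, hi₀⟩ := Finset.univ.exists_min_image r (Finset.univ_nonempty_iff.mpr ⟨⟨0, hd⟩⟩)
  have hT := isAllowTree_graft hTs hroot hr ⟨i₀, rfl⟩ (fun i => hi₀ i (Finset.mem_univ i)) hF
    fun i j hij => by simpa only [hsupp, Finset.disjoint_coe] using hdisj i j hij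
  have : Nonempty (Fin d) := ⟨⟨0, hd⟩⟩
  refine ⟨r i₀, hT, by simp [hT.Psi_graft hroot hr, hg], fun hadm hseq => ?_⟩
  refine isAdmTree_graft hadm hroot hr ⟨i₀, rfl⟩ (fun i => hi₀ i (Finset.mem_univ i)) hF
    fun i j hij => ?_
  rw [hsupp, hsupp]
  rcases lt_trichotomy i j with h | rfl | h
  · exact hseq.2.1 i j h
  · exact absurd hij (lt_irrefl _)
  · exact absurd (hseq.2.1 j i h _ (hmem j) _ (hmem i)) hij.not_gt

theorem exists_Psi_eq_of_mem_KMn (hθ : 0 < θ) {f : Fn} (hf : f ∈ KMn F θ m)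
    (hpos : ∀ n, 0 ≤ f n) (hf0 : f ≠ 0) :
    ∃ T, IsAllowTree F T ∧ treeLen T ≤ m + 1 ∧ Psi θ T = f := by
  induction m generalizing f with
  | zero =>
    obtain ⟨n, rfl⟩ := eq_single_of_mem_KMn_zero hf hpos hf0
    exact ⟨{[n]}, isAllowTree_singleton n, (treeLen_singleton n).le, Psi_singleton θ n⟩
  | succ m ih =>
    rcases hf with hf | ⟨d, g, hg, hseq, rfl⟩
    · obtain ⟨T, hT, hlen, hΨ⟩ := ih hf hpos hf0
      exact ⟨T, hT, hlen.trans m.succ.le_succ, hΨ⟩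
    have hd : 0 < d := Nat.pos_of_ne_zero (by rintro rfl; simp at hf0)
    choose Ts hTs hlen hΨ using fun i => ih (hg i) (nonneg_of_smul_sum_nonneg hθ hseq.2.1 hpos i)
      (Finsupp.support_nonempty_iff.mp (hseq.1 i))
    obtain ⟨n, hT, hΨT, -⟩ := exists_graft_of_allowableSeq hθ hd hTs hΨ hseq
    exact ⟨graft n Ts, hT, treeLen_graft_le hlen, hΨT⟩

theorem exists_Psi_eq_of_mem_Kn (hθ : 0 < θ) {f : Fn} (hf : f ∈ Kn F θ m)
    (hpos : ∀ n, 0 ≤ f n) (hf0 : f ≠ 0) :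
    ∃ T, IsAdmTree F T ∧ treeLen T ≤ m + 1 ∧ Psi θ T = f := by
  induction m generalizing f with
  | zero =>
    obtain ⟨n, rfl⟩ := eq_single_of_mem_KMn_zero (F := F) (θ := θ) hf hpos hf0
    exact ⟨{[n]}, isAdmTree_singleton n, (treeLen_singleton n).le, Psi_singleton θ n⟩
  | succ m ih =>
    rcases hf with hf | ⟨d, g, hg, hseq, rfl⟩
    · obtain ⟨T, hT, hlen, hΨ⟩ := ih hf hpos hf0
      exact ⟨T, hT, hlen.trans m.succ.le_succ, hΨ⟩
    have hd : 0 < d := Nat.pos_of_ne_zero (by rintro rfl; simp at hf0)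
    choose Ts hTs hlen hΨ using fun i => ih (hg i)
      (nonneg_of_smul_sum_nonneg hθ hseq.allowableSeq.2.1 hpos i)
      (Finsupp.support_nonempty_iff.mp (hseq.1 i))
    obtain ⟨n, -, hΨT, hadm⟩ :=
      exists_graft_of_allowableSeq hθ hd (fun i => (hTs i).1) hΨ hseq.allowableSeq
    exact ⟨graft n Ts, hadm hTs hseq, treeLen_graft_le hlen, hΨT⟩

end Realization

section Levels

variable {F : Set (Finset ℕ)} {θ : ℝ} {K : ℕ → Set Fn} {Tr : Finset (List ℕ) → Prop}

theorem Psi_not_mem_of_lt (hθ0 : 0 < θ) (hθ1 : θ < 1)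
    (hlow : ∀ m, ∀ f ∈ K m, ∀ n, f n ≠ 0 → θ ^ m ≤ |f n|) {T : Finset (List ℕ)}
    (hT : IsAllowTree F T) {m : ℕ} (hm : m < treeLen T - 1) : Psi θ T ∉ K m := by
  intro hmem
  obtain ⟨k, hk⟩ := hT.exists_Psi_apply_eq_pow (θ := θ)
  have := hlow m _ hmem k (by rw [hk]; positivity)
  rw [hk, abs_of_pos (by positivity)] at this
  exact (pow_lt_pow_right_of_lt_one₀ hθ0 hθ1 hm).not_ge this

theorem Psi_surjOn_levels (hθ0 : 0 < θ) (hθ1 : θ < 1) (hK : Monotone K) (h0 : (0 : Fn) ∈ K 0)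
    (hlow : ∀ m, ∀ f ∈ K m, ∀ n, f n ≠ 0 → θ ^ m ≤ |f n|)
    (hTr : ∀ T, Tr T → IsAllowTree F T)
    (hmem : ∀ m T, Tr T → treeLen T ≤ m + 1 → Psi θ T ∈ K m)
    (hsurj : ∀ m, ∀ f ∈ K m, (∀ n, 0 ≤ f n) → f ≠ 0 →
      ∃ T, Tr T ∧ treeLen T ≤ m + 1 ∧ Psi θ T = f) :
    (∀ T, Tr T → treeLen T = 1 → Psi θ T ∈ {f ∈ K 0 | ∀ n, 0 ≤ f n} \ {0}) ∧
    (∀ f ∈ {f ∈ K 0 | ∀ n, 0 ≤ f n} \ {0}, ∃ T, Tr T ∧ treeLen T = 1 ∧ Psi θ T = f) ∧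
    (∀ ℓ, 2 ≤ ℓ → ∀ T, Tr T → treeLen T = ℓ →
      Psi θ T ∈ {f ∈ K (ℓ - 1) | ∀ n, 0 ≤ f n} \ {f ∈ K (ℓ - 2) | ∀ n, 0 ≤ f n}) ∧
    (∀ ℓ, 2 ≤ ℓ → ∀ f ∈ {f ∈ K (ℓ - 1) | ∀ n, 0 ≤ f n} \ {f ∈ K (ℓ - 2) | ∀ n, 0 ≤ f n},
      ∃ T, Tr T ∧ treeLen T = ℓ ∧ Psi θ T = f) := by
  refine ⟨fun T hT h1 => ?_, fun f ⟨⟨hf, hpos⟩, hf0⟩ => ?_, fun ℓ hℓ T hT hlen => ?_,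
    fun ℓ hℓ f ⟨⟨hf, hpos⟩, hf2⟩ => ?_⟩
  · exact ⟨⟨hmem 0 T hT h1.le, Psi_nonneg hθ0.le T⟩, (hTr T hT).Psi_ne_zero hθ0⟩
  · obtain ⟨T, hT, hlen, rfl⟩ := hsurj 0 f hf hpos hf0
    exact ⟨T, hT, le_antisymm hlen (hTr T hT).one_le_treeLen, rfl⟩
  · exact ⟨⟨hmem (ℓ - 1) T hT (by omega), Psi_nonneg hθ0.le T⟩,
      fun h => Psi_not_mem_of_lt hθ0 hθ1 hlow (hTr T hT) (by omega) h.1⟩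
  · have hf0 : f ≠ 0 := by
      rintro rfl
      exact hf2 ⟨hK (Nat.zero_le _) h0, fun _ => le_rfl⟩
    obtain ⟨T, hT, hlen, rfl⟩ := hsurj (ℓ - 1) f hf hpos hf0
    refine ⟨T, hT, le_antisymm (by omega) (not_lt.mp fun hlt => hf2 ⟨?_, hpos⟩), rfl⟩
    exact hK (by omega) (hmem (treeLen T - 1) T hT (by omega))

end Levels

theorem Psi_surjective_general (F : Set (Finset ℕ))
    (θ : ℝ) (hθ0 : 0 < θ) (hθ1 : θ < 1) :
    (∀ T : Finset (List ℕ), IsAllowTree F T → treeLen T = 1 →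
        Psi θ T ∈ PMn F θ 0 \ {0}) ∧
    (∀ f ∈ PMn F θ 0 \ {0}, ∃ T : Finset (List ℕ),
        IsAllowTree F T ∧ treeLen T = 1 ∧ Psi θ T = f) ∧
    (∀ ℓ : ℕ, 2 ≤ ℓ → ∀ T : Finset (List ℕ), IsAllowTree F T → treeLen T = ℓ →
        Psi θ T ∈ PMn F θ (ℓ - 1) \ PMn F θ (ℓ - 2)) ∧
    (∀ ℓ : ℕ, 2 ≤ ℓ → ∀ f ∈ PMn F θ (ℓ - 1) \ PMn F θ (ℓ - 2),
        ∃ T : Finset (List ℕ), IsAllowTree F T ∧ treeLen T = ℓ ∧ Psi θ T = f) ∧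
    (∀ T : Finset (List ℕ), IsAdmTree F T → treeLen T = 1 →
        Psi θ T ∈ Pn F θ 0 \ {0}) ∧
    (∀ f ∈ Pn F θ 0 \ {0}, ∃ T : Finset (List ℕ),
        IsAdmTree F T ∧ treeLen T = 1 ∧ Psi θ T = f) ∧
    (∀ ℓ : ℕ, 2 ≤ ℓ → ∀ T : Finset (List ℕ), IsAdmTree F T → treeLen T = ℓ →
        Psi θ T ∈ Pn F θ (ℓ - 1) \ Pn F θ (ℓ - 2)) ∧
    (∀ ℓ : ℕ, 2 ≤ ℓ → ∀ f ∈ Pn F θ (ℓ - 1) \ Pn F θ (ℓ - 2),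
        ∃ T : Finset (List ℕ), IsAdmTree F T ∧ treeLen T = ℓ ∧ Psi θ T = f) := by
  obtain ⟨h1, h2, h3, h4⟩ := Psi_surjOn_levels (F := F) hθ0 hθ1 KMn_mono (Or.inl rfl)
    (fun _ _ hf _ => pow_le_abs_apply_of_mem_KMn hθ0.le hθ1.le hf) (fun _ => id)
    (fun _ _ => Psi_mem_KMn hθ0) (fun _ _ => exists_Psi_eq_of_mem_KMn hθ0)
  obtain ⟨h5, h6, h7, h8⟩ := Psi_surjOn_levels (F := F) hθ0 hθ1 Kn_mono (Or.inl rfl)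
    (fun _ _ hf _ => pow_le_abs_apply_of_mem_Kn hθ0.le hθ1.le hf) (fun _ hT => hT.1)
    (fun _ _ => Psi_mem_Kn hθ0) (fun _ _ => exists_Psi_eq_of_mem_Kn hθ0)
  exact ⟨h1, h2, h3, h4, h5, h6, h7, h8⟩

/-- For a regular family `F` and `0 < θ < 1`, `Ψ` maps `𝒯^{M,(1)}`
onto `P^M_0 \ {0}`, and for each `ℓ ≥ 2` it maps `𝒯^{M,(ℓ)}` onto
`P^M_{ℓ-1} \ P^M_{ℓ-2}`; moreover `Ψ` maps `𝒯^{(1)}` onto `P_0 \ {0}` and, for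
`ℓ ≥ 2`, `𝒯^{(ℓ)}` onto `P_{ℓ-1} \ P_{ℓ-2}`. -/
theorem Psi_surjective (F : Set (Finset ℕ)) (hF : IsRegularFam F)
    (θ : ℝ) (hθ0 : 0 < θ) (hθ1 : θ < 1) :
    (∀ T : Finset (List ℕ), IsAllowTree F T → treeLen T = 1 →
        Psi θ T ∈ PMn F θ 0 \ {0}) ∧
    (∀ f ∈ PMn F θ 0 \ {0}, ∃ T : Finset (List ℕ),
        IsAllowTree F T ∧ treeLen T = 1 ∧ Psi θ T = f) ∧
    (∀ ℓ : ℕ, 2 ≤ ℓ → ∀ T : Finset (List ℕ), IsAllowTree F T → treeLen T = ℓ →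
        Psi θ T ∈ PMn F θ (ℓ - 1) \ PMn F θ (ℓ - 2)) ∧
    (∀ ℓ : ℕ, 2 ≤ ℓ → ∀ f ∈ PMn F θ (ℓ - 1) \ PMn F θ (ℓ - 2),
        ∃ T : Finset (List ℕ), IsAllowTree F T ∧ treeLen T = ℓ ∧ Psi θ T = f) ∧
    (∀ T : Finset (List ℕ), IsAdmTree F T → treeLen T = 1 →
        Psi θ T ∈ Pn F θ 0 \ {0}) ∧
    (∀ f ∈ Pn F θ 0 \ {0}, ∃ T : Finset (List ℕ),
        IsAdmTree F T ∧ treeLen T = 1 ∧ Psi θ T = f) ∧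
    (∀ ℓ : ℕ, 2 ≤ ℓ → ∀ T : Finset (List ℕ), IsAdmTree F T → treeLen T = ℓ →
        Psi θ T ∈ Pn F θ (ℓ - 1) \ Pn F θ (ℓ - 2)) ∧
    (∀ ℓ : ℕ, 2 ≤ ℓ → ∀ f ∈ Pn F θ (ℓ - 1) \ Pn F θ (ℓ - 2),
        ∃ T : Finset (List ℕ), IsAdmTree F T ∧ treeLen T = ℓ ∧ Psi θ T = f) :=
  Psi_surjective_general F θ hθ0 hθ1
end
end

section
/- Let F be a regular family of finite subsets of ℕ, let k, m ∈ ℕ, a_1 < a_2 < ⋯ < a_k in ℕ, and B_1 < B_2 < ⋯ < B_m finite subsets of ℕ, such that {a_1, …, a_k} ∩ (B_1 ∪ ⋯ ∪ B_m) = ∅ and {a_1, …, a_k} ∪ {min B_j : j = 1, …, m} ∈ (F)^s for some s ∈ ℕ. Set a_0 = 0 and a_{k+1} = ∞. Then the family D = ({(a_i, a_{i+1}) ∩ B_j : 0 ≤ i ≤ k, 1 ≤ j ≤ m} \ {∅}) ∪ {{a_i} : 1 ≤ i ≤ k} can be ordered into D_1 < D_2 < ⋯ < D_ℓ with ℓ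 ≤ m + 2k and {min D_j : j = 1, …, ℓ} ∈ (F[A_2])^s. -/
/-!
Let `S = {a_i} ∪ {min B_j}` and let `T` be the set of minima of the members of `𝒟`; then
`S ⊆ T`. Send `y ∈ T` to the largest point `g y` of `S` below it. A piece whose minimum is not
some `min B_j` starts right after some `a_i` with `B_j` straddling `a_i`, and then `g` maps its
minimum to that `a_i`; as `a_i` determines both the interval and `B_j`, `g` is injective on
`T \ S` with values among the `a_i`. So every fibre of `g` has at most two points and
`|T| ≤ |S| + k ≤ m + 2k`. Splitting `T` along `S = M_1 ∪ ⋯ ∪ M_s`, the block `g⁻¹(M_t) ∩ T`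
is the union of the fibres over `M_t`, whose minima form `M_t ∈ F`: it lies in `F[A_2]`.
Finally, distinct members of `𝒟` are comparable for `<`, so listing them by their minima
gives `D_1 < ⋯ < D_ℓ`.
-/

noncomputable section

open scoped Classical

/-- `(F)^s = {M₁ ∪ ⋯ ∪ M_s : M₁ < ⋯ < M_s, each Mᵢ ∈ F}`. -/
def powF (F : Set (Finset ℕ)) (s : ℕ) : Set (Finset ℕ) :=
  {A | ∃ M : Fin s → Finset ℕ, (∀ i, M i ∈ F) ∧
        (∀ i j : Fin s, i < j → finLT (M i) (M j)) ∧ A = Finset.univ.biUnion M}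

/-- `x` lies in the open interval `(a_i, a_{i+1})`, for `0 ≤ i ≤ k`, where
`a_1 < ⋯ < a_k` is given (zero-indexed as `a 0, …, a (k-1)`), `a_0 = 0` and
`a_{k+1} = ∞`. -/
def inOpenInterval (k : ℕ) (a : Fin k → ℕ) (i : ℕ) (x : ℕ) : Prop :=
  (∀ h : 1 ≤ i ∧ i ≤ k, a ⟨i - 1, by omega⟩ < x) ∧ (∀ h : i < k, x < a ⟨i, h⟩)

/-- The family `𝒟 = ({(a_i, a_{i+1}) ∩ B_j : 0 ≤ i ≤ k, 1 ≤ j ≤ m} \ {∅})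
∪ {{a_i} : 1 ≤ i ≤ k}`. -/
def pieceFam (k m : ℕ) (a : Fin k → ℕ) (B : Fin m → Finset ℕ) : Set (Finset ℕ) :=
  {X | (∃ i : ℕ, i ≤ k ∧ ∃ j : Fin m,
          X = (B j).filter (fun x => inOpenInterval k a i x) ∧ X ≠ ∅) ∨
       ∃ i : Fin k, X = ({a i} : Finset ℕ)}


open Finset

lemma sMin_mem {A : Finset ℕ} (h : A.Nonempty) : sMin A ∈ A := by
  simpa [sMin] using Nat.sInf_mem (s := (A : Set ℕ)) (by exact_mod_cast h)

lemma sMin_le {A : Finset ℕ} {x : ℕ} (h : x ∈ A) : sMin A ≤ x := Nat.sInf_le h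

lemma sMin_eq_of_forall_le {A : Finset ℕ} {x : ℕ} (hx : x ∈ A) (h : ∀ y ∈ A, x ≤ y) :
    sMin A = x :=
  le_antisymm (sMin_le hx) (h _ (sMin_mem ⟨x, hx⟩))

lemma sMin_singleton (x : ℕ) : sMin {x} = x := sMin_eq_of_forall_le (mem_singleton_self x) (by simp)

lemma sMin_lt_sMin_of_finLT {X Y : Finset ℕ} (hX : X.Nonempty) (hY : Y.Nonempty)
    (h : finLT X Y) : sMin X < sMin Y :=
  h _ (sMin_mem hX) _ (sMin_mem hY)

lemma finLT.mono {X Y X' Y' : Finset ℕ} (h : finLT X Y) (hX : X' ⊆ X) (hY : Y' ⊆ Y) :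
    finLT X' Y' :=
  fun x hx y hy => h x (hX hx) y (hY hy)

lemma index_le_of_mem_of_le {κ : Type*} [LinearOrder κ] {B : κ → Finset ℕ}
    (hBlt : ∀ i j, i < j → finLT (B i) (B j)) {i j : κ} {x y : ℕ} (hx : x ∈ B i) (hy : y ∈ B j)
    (hxy : x ≤ y) : i ≤ j :=
  le_of_not_gt fun h => (hBlt j i h y hy x hx).not_ge hxy

lemma injOn_sMin_of_comparable {P : Finset (Finset ℕ)} (hne : ∀ X ∈ P, X.Nonempty)
    (hcomp : ∀ X ∈ P, ∀ Y ∈ P, X ≠ Y → finLT X Y ∨ finLT Y X) : Set.InjOn sMin P := by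
  intro X hX Y hY hXY
  by_contra hne'
  rcases hcomp X hX Y hY hne' with h | h
  · exact (sMin_lt_sMin_of_finLT (hne X hX) (hne Y hY) h).ne hXY
  · exact (sMin_lt_sMin_of_finLT (hne Y hY) (hne X hX) h).ne hXY.symm

lemma exists_finLT_enumeration (P : Finset (Finset ℕ)) (hne : ∀ X ∈ P, X.Nonempty)
    (hcomp : ∀ X ∈ P, ∀ Y ∈ P, X ≠ Y → finLT X Y ∨ finLT Y X) :
    ∃ D : Fin P.card → Finset ℕ,
      (∀ i j, i < j → finLT (D i) (D j)) ∧ univ.image D = P := by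
  have hinj := injOn_sMin_of_comparable hne hcomp
  let e := (P.image sMin).orderEmbOfFin (card_image_of_injOn hinj)
  have hex : ∀ i, ∃ X ∈ P, sMin X = e i := fun i =>
    mem_image.mp ((P.image sMin).orderEmbOfFin_mem _ i)
  let D i := Function.invFunOn sMin P (e i)
  have hD : ∀ i, D i ∈ P ∧ sMin (D i) = e i := fun i =>
    ⟨Function.invFunOn_mem (hex i), Function.invFunOn_eq (hex i)⟩
  refine ⟨D, fun i j hij => ?_, ?_⟩
  · have hlt : sMin (D i) < sMin (D j) := by
      rw [(hD i).2, (hD j).2]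
      exact e.strictMono hij
    refine (hcomp _ (hD i).1 _ (hD j).1 fun h => hlt.ne (congrArg sMin h)).resolve_right
      fun h => ?_
    exact hlt.not_gt (sMin_lt_sMin_of_finLT (hne _ (hD j).1) (hne _ (hD i).1) h)
  · ext X
    simp only [mem_image, mem_univ, true_and]
    refine ⟨fun ⟨i, hi⟩ => hi ▸ (hD i).1, fun hX => ?_⟩
    have : sMin X ∈ Set.range e := by
      rw [Finset.range_orderEmbOfFin]
      exact mem_image_of_mem sMin hX
    obtain ⟨i, hi⟩ := this
    exact ⟨i, hinj (hD i).1 hX ((hD i).2.trans hi)⟩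

lemma mem_famComp_of_fibers {F : Set (Finset ℕ)} {n : ℕ} {M T : Finset ℕ} (g : ℕ → ℕ)
    (hM : M ∈ F) (hMT : M ⊆ T) (hgT : ∀ y ∈ T, g y ∈ M) (hgM : ∀ x ∈ M, g x = x)
    (hg_le : ∀ y, g y ≤ y) (hg_mono : Monotone g)
    (hfib : ∀ x ∈ M, (T.filter (g · = x)).card ≤ n) :
    T ∈ famComp F (Acard n) := by
  set fib : ℕ → Finset ℕ := fun x => T.filter (g · = x)
  have hmem_fib : ∀ x ∈ M, x ∈ fib x := fun x hx => mem_filter.mpr ⟨hMT hx, hgM x hx⟩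
  have hsMin_fib : ∀ x ∈ M, sMin (fib x) = x := fun x hx =>
    sMin_eq_of_forall_le (hmem_fib x hx) fun y hy => (mem_filter.mp hy).2 ▸ hg_le y
  have hfib_lt : ∀ x x', x < x' → finLT (fib x) (fib x') := by
    intro x x' hxx' y hy y' hy'
    rw [← (mem_filter.mp hy).2, ← (mem_filter.mp hy').2] at hxx'
    exact lt_of_not_ge fun h => (hg_mono h).not_gt hxx'
  obtain ⟨D, hDlt, hDimg⟩ := exists_finLT_enumeration (M.image fib)
    (by simpa using fun x hx => ⟨x, hmem_fib x hx⟩)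
    (by
      simp only [mem_image]
      rintro _ ⟨x, -, rfl⟩ _ ⟨x', -, rfl⟩ hne
      rcases lt_trichotomy x x' with h | rfl | h
      · exact .inl (hfib_lt x x' h)
      · exact absurd rfl hne
      · exact .inr (hfib_lt x' x h))
  have hD : ∀ i, ∃ x ∈ M, fib x = D i := fun i => by
    simpa only [hDimg, mem_image] using mem_image_of_mem D (mem_univ i)
  refine ⟨_, D, fun i => ?_, fun i => ?_, hDlt, ?_, ?_⟩
  · obtain ⟨x, hx, hxi⟩ := hD i
    exact hxi ▸ hfib x hx
  · obtain ⟨x, hx, hxi⟩ := hD i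
    exact hxi ▸ ⟨x, hmem_fib x hx⟩
  · rw [show univ.image (fun i => sMin (D i)) = (univ.image D).image sMin by
        rw [image_image]; rfl,
      hDimg, image_image, image_congr (f := sMin ∘ fib) (g := id) fun x hx => hsMin_fib x hx,
      image_id]
    exact hM
  · rw [show univ.biUnion D = (univ.image D).biUnion id by rw [image_biUnion]; rfl, hDimg,
      image_biUnion]
    ext y
    simp only [mem_biUnion, id, fib, mem_filter]
    exact ⟨fun hy => ⟨g y, hgT y hy, hy, rfl⟩, fun ⟨_, _, hy, _⟩ => hy⟩

lemma mem_powF_famComp_of_fibers {F : Set (Finset ℕ)} {s n : ℕ} {S T : Finset ℕ}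
    (hS : S ∈ powF F s) (hST : S ⊆ T) (hT : ∀ y ∈ T, ∃ x ∈ S, x ≤ y)
    (hfib : ∀ x ∈ S, (T.filter (Nat.findGreatest (· ∈ S) · = x)).card ≤ n) :
    T ∈ powF (famComp F (Acard n)) s := by
  obtain ⟨M, hMF, hMlt, rfl⟩ := hS
  set g := Nat.findGreatest (· ∈ univ.biUnion M)
  have hgT : ∀ y ∈ T, g y ∈ univ.biUnion M := fun y hy => by
    obtain ⟨x, hx, hxy⟩ := hT y hy
    exact Nat.findGreatest_spec hxy hx
  have hg_le : ∀ y, g y ≤ y := Nat.findGreatest_le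
  have hg_mono : Monotone g := fun _ _ => Nat.findGreatest_mono_right _
  have hMS : ∀ t, M t ⊆ univ.biUnion M := fun t => subset_biUnion_of_mem M (mem_univ t)
  refine ⟨fun t => T.filter (g · ∈ M t), fun t => ?_, ?_, ?_⟩
  · refine mem_famComp_of_fibers g (hMF t) (fun x hx => ?_) (fun y hy => (mem_filter.mp hy).2)
      (fun x hx => Nat.findGreatest_eq (hMS t hx)) hg_le hg_mono (fun x hx => ?_)
    · have hgx : g x = x := Nat.findGreatest_eq (hMS t hx)
      exact mem_filter.mpr ⟨hST (hMS t hx), by rw [hgx]; exact hx⟩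
    · exact (card_le_card (filter_subset_filter _ (filter_subset _ T))).trans (hfib x (hMS t hx))
  · intro t t' htt' y hy y' hy'
    have hlt := hMlt t t' htt' _ (mem_filter.mp hy).2 _ (mem_filter.mp hy').2
    exact lt_of_not_ge fun h => (hg_mono h).not_gt hlt
  · ext y
    simp only [mem_biUnion, mem_univ, true_and, mem_filter]
    refine ⟨fun hy => ?_, fun ⟨_, hy, _⟩ => hy⟩
    obtain ⟨t, -, ht⟩ := mem_biUnion.mp (hgT y hy)
    exact ⟨t, hy, ht⟩

section Pieces

variable {ι κ : Type*} [Fintype ι] [Fintype κ]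

def countBelow (a : ι → ℕ) (x : ℕ) : ℕ := (univ.filter fun t => a t < x).card

lemma countBelow_mono (a : ι → ℕ) : Monotone (countBelow a) := fun _ _ hxy =>
  card_le_card (monotone_filter_right _ fun _ _ ht => lt_of_lt_of_le ht hxy)

lemma countBelow_eq_iff {a : ι → ℕ} {x y : ℕ} :
    countBelow a x = countBelow a y ↔ ∀ t, a t < x ↔ a t < y := by
  refine ⟨fun h => ?_, fun h => congrArg card (filter_congr fun t _ => h t)⟩
  wlog hxy : x ≤ y generalizing x y
  · exact fun t => (this h.symm (le_of_not_ge hxy) t).symm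
  have hsub : univ.filter (fun t => a t < x) ⊆ univ.filter (fun t => a t < y) :=
    monotone_filter_right _ fun _ _ ht => lt_of_lt_of_le ht hxy
  have heq := eq_of_subset_of_card_le hsub h.ge
  intro t
  simpa using congrArg (t ∈ ·) heq

lemma lt_countBelow_iff {k : ℕ} {a : Fin k → ℕ} (ha : StrictMono a) {x : ℕ} {t : Fin k} :
    (t : ℕ) < countBelow a x ↔ a t < x := by
  constructor
  · intro ht
    by_contra! hxt
    have hsub : univ.filter (fun t' => a t' < x) ⊆ Iio t := fun t' ht' =>
      mem_Iio.mpr (ha.lt_iff_lt.mp (lt_of_lt_of_le (mem_filter.mp ht').2 hxt))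
    exact (card_le_card hsub).not_gt (by rwa [Fin.card_Iio])
  · intro ht
    have hsub : Iic t ⊆ univ.filter (fun t' => a t' < x) := fun t' ht' =>
      mem_filter.mpr ⟨mem_univ _, lt_of_le_of_lt (ha.monotone (mem_Iic.mp ht')) ht⟩
    have := card_le_card hsub
    rw [Fin.card_Iic] at this
    exact this

lemma inOpenInterval_iff {k : ℕ} {a : Fin k → ℕ} (ha : StrictMono a) {i x : ℕ}
    (hx : ∀ t, a t ≠ x) (hi : i ≤ k) :
    inOpenInterval k a i x ↔ countBelow a x = i := by
  have hck : countBelow a x ≤ k := (card_filter_le _ _).trans (card_fin k).le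
  constructor
  · rintro ⟨hlow, hup⟩
    have e1 : 1 ≤ i → i - 1 < countBelow a x := fun h =>
      (lt_countBelow_iff ha (t := ⟨i - 1, by omega⟩)).mpr (hlow ⟨h, hi⟩)
    have e2 : i < k → ¬ i < countBelow a x := fun h h' =>
      (hup h).not_gt ((lt_countBelow_iff ha (t := ⟨i, h⟩)).mp h')
    omega
  · rintro rfl
    refine ⟨fun h => (lt_countBelow_iff ha).mp (by simp only; omega), fun h => ?_⟩
    refine lt_of_le_of_ne (not_lt.mp fun h' => ?_) (hx _).symm
    exact (lt_irrefl _) ((lt_countBelow_iff ha (t := ⟨_, h⟩)).mpr h')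

/-- For `x ∉ {a_t}`, the piece `(a_i, a_{i+1}) ∩ B` containing `x` (see `inOpenInterval_iff`). -/
def pieceOf (a : ι → ℕ) (B : Finset ℕ) (x : ℕ) : Finset ℕ :=
  B.filter fun y => countBelow a y = countBelow a x

lemma mem_pieceOf {a : ι → ℕ} {B : Finset ℕ} {x y : ℕ} :
    y ∈ pieceOf a B x ↔ y ∈ B ∧ countBelow a y = countBelow a x := mem_filter

lemma pieceOf_subset (a : ι → ℕ) (B : Finset ℕ) (x : ℕ) : pieceOf a B x ⊆ B := filter_subset _ _

lemma mem_pieceOf_self {a : ι → ℕ} {B : Finset ℕ} {x : ℕ} (hx : x ∈ B) : x ∈ pieceOf a B x :=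
  mem_filter.mpr ⟨hx, rfl⟩

lemma pieceOf_eq_of_countBelow_eq {a : ι → ℕ} {B : Finset ℕ} {x y : ℕ}
    (h : countBelow a x = countBelow a y) : pieceOf a B x = pieceOf a B y := by
  simp only [pieceOf, h]

lemma countBelow_eq_of_mem_pieceOf {a : ι → ℕ} {B : Finset ℕ} {x y : ℕ}
    (hy : y ∈ pieceOf a B x) : countBelow a y = countBelow a x := (mem_filter.mp hy).2

lemma finLT_pieceOf_of_countBelow_lt {a : ι → ℕ} {B B' : Finset ℕ} {x x' : ℕ}
    (h : countBelow a x < countBelow a x') : finLT (pieceOf a B x) (pieceOf a B' x') := by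
  intro y hy y' hy'
  rw [← countBelow_eq_of_mem_pieceOf hy, ← countBelow_eq_of_mem_pieceOf hy'] at h
  exact lt_of_not_ge fun h' => (countBelow_mono a h').not_gt h

/-- No point `a t` separates two points of a piece. -/
lemma pieceOf_comparable_singleton {a : ι → ℕ} {B : Finset ℕ} {x : ℕ} {t : ι}
    (ht : a t ∉ B) : finLT (pieceOf a B x) {a t} ∨ finLT {a t} (pieceOf a B x) := by
  by_cases hxt : a t < x
  · refine .inr fun _ hat y hy => ?_
    rw [mem_singleton.mp hat]
    exact (countBelow_eq_iff.mp (countBelow_eq_of_mem_pieceOf hy) t).mpr hxt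
  · refine .inl fun y hy _ hat => ?_
    rw [mem_singleton.mp hat]
    have hyt : ¬ a t < y := fun h =>
      hxt ((countBelow_eq_iff.mp (countBelow_eq_of_mem_pieceOf hy) t).mp h)
    exact lt_of_le_of_ne (not_lt.mp hyt) fun h => ht (h ▸ pieceOf_subset a B x hy)

/-- The family `𝒟` as a finset. -/
def pieces (a : ι → ℕ) (B : κ → Finset ℕ) : Finset (Finset ℕ) :=
  (univ.biUnion fun j => (B j).image (pieceOf a (B j))) ∪ univ.image fun t => {a t}

lemma mem_pieces {a : ι → ℕ} {B : κ → Finset ℕ} {X : Finset ℕ} :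
    X ∈ pieces a B ↔ (∃ j, ∃ x ∈ B j, X = pieceOf a (B j) x) ∨ ∃ t, X = {a t} := by
  simp only [pieces, mem_union, mem_biUnion, mem_image, mem_univ, true_and, eq_comm]

lemma mem_pieces_iff_mem_pieceFam {k m : ℕ} {a : Fin k → ℕ} (ha : StrictMono a)
    {B : Fin m → Finset ℕ} (hdisj : ∀ (i : Fin k) (j : Fin m), a i ∉ B j) {X : Finset ℕ} :
    X ∈ pieces a B ↔ X ∈ pieceFam k m a B := by
  have hB : ∀ j, ∀ x ∈ B j, ∀ t, a t ≠ x := fun j x hx t h => hdisj t j (h ▸ hx)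
  have hck : ∀ x, countBelow a x ≤ k := fun x => (card_filter_le _ _).trans (card_fin k).le
  have hfilter : ∀ j x, x ∈ B j → (B j).filter (fun y => inOpenInterval k a (countBelow a x) y) =
      pieceOf a (B j) x := fun j x hx =>
    filter_congr fun y hy => inOpenInterval_iff ha (hB j y hy) (hck x)
  rw [mem_pieces]
  constructor
  · rintro (⟨j, x, hx, rfl⟩ | ⟨t, rfl⟩)
    · exact .inl ⟨_, hck x, j, (hfilter j x hx).symm,
        nonempty_iff_ne_empty.mp ⟨x, mem_pieceOf_self hx⟩⟩
    · exact .inr ⟨t, rfl⟩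
  · rintro (⟨i, hi, j, rfl, hne⟩ | ⟨t, rfl⟩)
    · obtain ⟨x, hx⟩ := nonempty_iff_ne_empty.mpr hne
      obtain ⟨hxB, hxi⟩ := mem_filter.mp hx
      refine .inl ⟨j, x, hxB, ?_⟩
      rw [← hfilter j x hxB, (inOpenInterval_iff ha (hB j x hxB) hi).mp hxi]
    · exact .inr ⟨t, rfl⟩

end Pieces

section Anchors

variable {ι κ : Type*} [Fintype ι] [Fintype κ] {a : ι → ℕ} {B : κ → Finset ℕ}

lemma pieces_nonempty : ∀ X ∈ pieces a B, X.Nonempty := by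
  intro X hX
  rcases mem_pieces.mp hX with ⟨j, x, hx, rfl⟩ | ⟨t, rfl⟩
  · exact ⟨x, mem_pieceOf_self hx⟩
  · exact singleton_nonempty _

lemma pieces_comparable [LinearOrder κ]
    (hBlt : ∀ i j, i < j → finLT (B i) (B j)) (hdisj : ∀ t j, a t ∉ B j) :
    ∀ X ∈ pieces a B, ∀ Y ∈ pieces a B, X ≠ Y → finLT X Y ∨ finLT Y X := by
  intro X hX Y hY hXY
  rcases mem_pieces.mp hX with ⟨j, x, hx, rfl⟩ | ⟨t, rfl⟩ <;>
    rcases mem_pieces.mp hY with ⟨j', x', hx', rfl⟩ | ⟨t', rfl⟩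
  · rcases lt_trichotomy j j' with h | rfl | h
    · exact .inl ((hBlt j j' h).mono (pieceOf_subset _ _ _) (pieceOf_subset _ _ _))
    · rcases lt_trichotomy (countBelow a x) (countBelow a x') with h | h | h
      · exact .inl (finLT_pieceOf_of_countBelow_lt h)
      · exact absurd (pieceOf_eq_of_countBelow_eq h) hXY
      · exact .inr (finLT_pieceOf_of_countBelow_lt h)
    · exact .inr ((hBlt j' j h).mono (pieceOf_subset _ _ _) (pieceOf_subset _ _ _))
  · exact pieceOf_comparable_singleton (hdisj t' j)
  · exact (pieceOf_comparable_singleton (hdisj t j')).symm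
  · rcases lt_trichotomy (a t) (a t') with h | h | h
    · exact .inl (by simpa [finLT] using h)
    · exact absurd (by rw [h]) hXY
    · exact .inr (by simpa [finLT] using h)

def anchors (a : ι → ℕ) (B : κ → Finset ℕ) : Finset ℕ :=
  univ.image a ∪ univ.image fun j => sMin (B j)

lemma apply_mem_anchors (t : ι) : a t ∈ anchors a B :=
  mem_union_left _ (mem_image_of_mem _ (mem_univ t))

lemma sMin_mem_anchors (j : κ) : sMin (B j) ∈ anchors a B :=
  mem_union_right _ (mem_image_of_mem (fun j => sMin (B j)) (mem_univ j))

lemma anchors_subset_image_sMin (hBne : ∀ j, (B j).Nonempty) :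
    anchors a B ⊆ (pieces a B).image sMin := by
  intro x hx
  rcases mem_union.mp hx with hx | hx <;> obtain ⟨i, -, rfl⟩ := mem_image.mp hx
  · exact mem_image.mpr ⟨{a i}, mem_pieces.mpr (.inr ⟨i, rfl⟩), sMin_singleton _⟩
  · have hmin := sMin_mem (hBne i)
    refine mem_image.mpr ⟨_, mem_pieces.mpr (.inl ⟨i, _, hmin, rfl⟩), ?_⟩
    exact sMin_eq_of_forall_le (mem_pieceOf_self hmin) fun y hy => sMin_le (pieceOf_subset _ _ _ hy)

lemma exists_anchor_le :
    ∀ y ∈ (pieces a B).image sMin, ∃ x ∈ anchors a B, x ≤ y := by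
  intro y hy
  obtain ⟨X, hX, rfl⟩ := mem_image.mp hy
  rcases mem_pieces.mp hX with ⟨j, x, hx, rfl⟩ | ⟨t, rfl⟩
  · exact ⟨_, sMin_mem_anchors j,
      sMin_le (pieceOf_subset _ _ _ (sMin_mem ⟨x, mem_pieceOf_self hx⟩))⟩
  · exact ⟨a t, apply_mem_anchors t, (sMin_singleton _).ge⟩

/-- Some `a t` separates `min B_j` from `y`, and no `min B_i` lies strictly between them. -/
lemma exists_findGreatest_anchors_eq [LinearOrder κ]
    (hBne : ∀ j, (B j).Nonempty) (hBlt : ∀ i j, i < j → finLT (B i) (B j))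
    (hdisj : ∀ t j, a t ∉ B j) {y : ℕ} (hy : y ∈ (pieces a B).image sMin)
    (hyS : y ∉ anchors a B) :
    ∃ j t, y ∈ B j ∧ sMin (pieceOf a (B j) y) = y ∧ sMin (B j) < a t ∧
      Nat.findGreatest (· ∈ anchors a B) y = a t := by
  obtain ⟨X, hX, rfl⟩ := mem_image.mp hy
  rcases mem_pieces.mp hX with ⟨j, x, hx, rfl⟩ | ⟨t, rfl⟩
  swap
  · exact absurd (by rw [sMin_singleton]; exact apply_mem_anchors t) hyS
  set y := sMin (pieceOf a (B j) x)
  have hyX : y ∈ pieceOf a (B j) x := sMin_mem ⟨x, mem_pieceOf_self hx⟩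
  have hyB : y ∈ B j := pieceOf_subset _ _ _ hyX
  have hbB := sMin_mem (hBne j)
  have hby : sMin (B j) < y := lt_of_le_of_ne (sMin_le hyB) fun h => hyS (h ▸ sMin_mem_anchors j)
  have hcount : countBelow a (sMin (B j)) ≠ countBelow a y := fun h =>
    (sMin_le (mem_pieceOf.mpr ⟨hbB, h.trans (countBelow_eq_of_mem_pieceOf hyX)⟩)).not_gt hby
  obtain ⟨t, ht⟩ := not_forall.mp (mt countBelow_eq_iff.mpr hcount)
  have hty : a t < y := by
    by_contra h
    exact ht ⟨fun h' => absurd (h'.trans hby) h, fun h' => absurd h' h⟩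
  have hbt : sMin (B j) < a t :=
    lt_of_le_of_ne (not_lt.mp fun h => ht (iff_of_true h hty)) fun h => hdisj t j (h ▸ hbB)
  have hg : a t ≤ Nat.findGreatest (· ∈ anchors a B) y :=
    Nat.le_findGreatest hty.le (apply_mem_anchors t)
  rcases mem_union.mp (Nat.findGreatest_spec hty.le (apply_mem_anchors (B := B) t))
    with hgS | hgS <;>
    obtain ⟨i, -, hi⟩ := mem_image.mp hgS
  · refine ⟨j, i, hyB, ?_, hbt.trans_le (hg.trans hi.ge), hi.symm⟩
    rw [pieceOf_eq_of_countBelow_eq (countBelow_eq_of_mem_pieceOf hyX)]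
  · have hgy := hi ▸ Nat.findGreatest_le (P := (· ∈ anchors a B)) y
    have hij : i = j := le_antisymm (index_le_of_mem_of_le hBlt (sMin_mem (hBne i)) hyB hgy)
      (index_le_of_mem_of_le hBlt hbB (sMin_mem (hBne i)) (hbt.le.trans (hg.trans hi.ge)))
    subst hij
    exact absurd (hbt.trans_le (hg.trans hi.ge)) (lt_irrefl _)

/-- Two non-anchor minima of pieces with the same anchor below them lie in the same `B j`
(both `B j` straddle that anchor) and in the same piece (an `a t` between them would be a
larger anchor below one of them). -/
lemma injOn_findGreatest_anchors [LinearOrder κ]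
    (hBne : ∀ j, (B j).Nonempty) (hBlt : ∀ i j, i < j → finLT (B i) (B j))
    (hdisj : ∀ t j, a t ∉ B j) :
    Set.InjOn (Nat.findGreatest (· ∈ anchors a B)) ↑((pieces a B).image sMin \ anchors a B) := by
  intro y hy y' hy' hgg
  rw [coe_sdiff, Set.mem_sdiff, mem_coe] at hy hy'
  obtain ⟨j, t, hyB, hyp, hbt, hgt⟩ :=
    exists_findGreatest_anchors_eq hBne hBlt hdisj hy.1 hy.2
  obtain ⟨j', t', hyB', hyp', hbt', hgt'⟩ :=
    exists_findGreatest_anchors_eq hBne hBlt hdisj hy'.1 hy'.2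
  have hty : a t < y :=
    lt_of_le_of_ne (hgt ▸ Nat.findGreatest_le y) fun h => hdisj t j (h ▸ hyB)
  have hty' : a t' < y' :=
    lt_of_le_of_ne (hgt' ▸ Nat.findGreatest_le y') fun h => hdisj t' j' (h ▸ hyB')
  have htt : a t = a t' := hgt.symm.trans (hgg.trans hgt')
  have hjj : j = j' := le_antisymm
    (index_le_of_mem_of_le hBlt (sMin_mem (hBne j)) hyB' (by omega))
    (index_le_of_mem_of_le hBlt (sMin_mem (hBne j')) hyB (by omega))
  subst hjj
  have hcount : countBelow a y = countBelow a y' := by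
    refine countBelow_eq_iff.mpr fun r => ?_
    have hr : ∀ {z}, a r < z → a r ≤ Nat.findGreatest (· ∈ anchors a B) z := fun h =>
      Nat.le_findGreatest h.le (apply_mem_anchors r)
    constructor <;> intro h <;> by_contra h' <;> have := hr h <;> omega
  rw [← hyp, ← hyp', pieceOf_eq_of_countBelow_eq hcount]

lemma card_filter_findGreatest_eq_le_two [LinearOrder κ]
    (hBne : ∀ j, (B j).Nonempty) (hBlt : ∀ i j, i < j → finLT (B i) (B j))
    (hdisj : ∀ t j, a t ∉ B j) (x : ℕ) :
    (((pieces a B).image sMin).filter (Nat.findGreatest (· ∈ anchors a B) · = x)).card ≤ 2 := by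
  set g := Nat.findGreatest (· ∈ anchors a B)
  set T := (pieces a B).image sMin
  have hsub : T.filter (g · = x) ⊆ insert x ((T \ anchors a B).filter (g · = x)) := by
    intro y hy
    obtain ⟨hyT, hgy⟩ := mem_filter.mp hy
    by_cases hyS : y ∈ anchors a B
    · rw [← hgy, show g y = y from Nat.findGreatest_eq hyS]
      exact mem_insert_self _ _
    · exact mem_insert_of_mem (mem_filter.mpr ⟨mem_sdiff.mpr ⟨hyT, hyS⟩, hgy⟩)
  have hone : ((T \ anchors a B).filter (g · = x)).card ≤ 1 :=
    card_le_one.mpr fun y hy y' hy' => injOn_findGreatest_anchors hBne hBlt hdisj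
      (mem_filter.mp hy).1 (mem_filter.mp hy').1
      ((mem_filter.mp hy).2.trans (mem_filter.mp hy').2.symm)
  calc (T.filter (g · = x)).card ≤ _ := card_le_card hsub
    _ ≤ _ + 1 := card_insert_le _ _
    _ ≤ 2 := by omega

lemma card_pieces_le [LinearOrder κ]
    (hBne : ∀ j, (B j).Nonempty) (hBlt : ∀ i j, i < j → finLT (B i) (B j))
    (hdisj : ∀ t j, a t ∉ B j) :
    (pieces a B).card ≤ Fintype.card κ + 2 * Fintype.card ι := by
  set T := (pieces a B).image sMin
  have hT : T.card = (pieces a B).card :=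
    card_image_of_injOn (injOn_sMin_of_comparable pieces_nonempty (pieces_comparable hBlt hdisj))
  have hsdiff : (T \ anchors a B).card ≤ Fintype.card ι := by
    refine (card_le_card_of_injOn _ (fun y hy => ?_)
      (injOn_findGreatest_anchors hBne hBlt hdisj)).trans
      (card_image_le.trans (card_univ.le) : (univ.image a).card ≤ _)
    obtain ⟨_, t, -, -, -, hgt⟩ :=
      exists_findGreatest_anchors_eq hBne hBlt hdisj (mem_sdiff.mp hy).1 (mem_sdiff.mp hy).2
    exact hgt ▸ mem_coe.mpr (mem_image_of_mem a (mem_univ t))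
  have hanchors : (anchors a B).card ≤ Fintype.card ι + Fintype.card κ :=
    (card_union_le _ _).trans
      (add_le_add (card_image_le.trans card_univ.le) (card_image_le.trans card_univ.le))
  have := card_le_card_sdiff_add_card (s := T) (t := anchors a B)
  omega

end Anchors

theorem piece_ordering_general (F : Set (Finset ℕ)) (k m s : ℕ)
    (a : Fin k → ℕ) (ha : StrictMono a)
    (B : Fin m → Finset ℕ) (hBne : ∀ j, (B j).Nonempty)
    (hBlt : ∀ i j : Fin m, i < j → finLT (B i) (B j))
    (hdisj : ∀ (i : Fin k) (j : Fin m), a i ∉ B j)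
    (hmins : (Finset.univ.image a ∪ Finset.univ.image fun j => sMin (B j)) ∈ powF F s) :
    ∃ (ℓ : ℕ) (D : Fin ℓ → Finset ℕ), ℓ ≤ m + 2 * k ∧
      (∀ i j : Fin ℓ, i < j → finLT (D i) (D j)) ∧
      (∀ i, D i ∈ pieceFam k m a B) ∧
      (∀ X ∈ pieceFam k m a B, ∃ i, D i = X) ∧
      (Finset.univ.image fun i => sMin (D i)) ∈ powF (famComp F (Acard 2)) s := by
  obtain ⟨D, hDlt, hDimg⟩ :=
    exists_finLT_enumeration (pieces a B) pieces_nonempty (pieces_comparable hBlt hdisj)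
  have hmem : ∀ X, X ∈ pieceFam k m a B ↔ ∃ i, D i = X := fun X => by
    rw [← mem_pieces_iff_mem_pieceFam ha hdisj]
    nth_rw 1 [← hDimg]
    simp
  refine ⟨_, D, ?_, hDlt, fun i => (hmem _).mpr ⟨i, rfl⟩, fun X hX => (hmem X).mp hX, ?_⟩
  · simpa using card_pieces_le hBne hBlt hdisj
  · rw [show univ.image (fun i => sMin (D i)) = (univ.image D).image sMin by rw [image_image]; rfl,
      hDimg]
    exact mem_powF_famComp_of_fibers hmins (anchors_subset_image_sMin hBne) exists_anchor_le
      fun x _ => card_filter_findGreatest_eq_le_two hBne hBlt hdisj x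

/-- Let `F` be a regular family, `a_1 < ⋯ < a_k` in `ℕ` and
`B_1 < ⋯ < B_m` finite sets with `{a_1, …, a_k} ∩ ⋃ B_j = ∅` and
`{a_1, …, a_k} ∪ {min B_j : j ≤ m} ∈ (F)^s`.  Then the family `𝒟` of the nonempty
pieces `(a_i, a_{i+1}) ∩ B_j` (with `a_0 = 0`, `a_{k+1} = ∞`) together with the
singletons `{a_i}` can be ordered into `D_1 < D_2 < ⋯ < D_ℓ` with `ℓ ≤ m + 2k` and
`{min D_j : j ≤ ℓ} ∈ (F[A_2])^s`. -/
theorem piece_ordering (F : Set (Finset ℕ)) (hF : IsRegularFam F) (k m s : ℕ)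
    (a : Fin k → ℕ) (ha : StrictMono a)
    (B : Fin m → Finset ℕ) (hBne : ∀ j, (B j).Nonempty)
    (hBlt : ∀ i j : Fin m, i < j → finLT (B i) (B j))
    (hdisj : ∀ (i : Fin k) (j : Fin m), a i ∉ B j)
    (hmins : (Finset.univ.image a ∪ Finset.univ.image fun j => sMin (B j)) ∈ powF F s) :
    ∃ (ℓ : ℕ) (D : Fin ℓ → Finset ℕ), ℓ ≤ m + 2 * k ∧
      (∀ i j : Fin ℓ, i < j → finLT (D i) (D j)) ∧
      (∀ i, D i ∈ pieceFam k m a B) ∧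
      (∀ X ∈ pieceFam k m a B, ∃ i, D i = X) ∧
      (Finset.univ.image fun i => sMin (D i)) ∈ powF (famComp F (Acard 2)) s :=
  piece_ordering_general F k m s a ha B hBne hBlt hdisj hmins
end
end

section
/- Let X be a Banach space and let (T_N : N ∈ [ℕ]^ω) be a uniformly bounded family of operators in L(X) satisfying the tree condition for some c > 0: T_M ∈ J^{T_N} whenever M ⊆ N, and dist(T_M, J^{T_N}) ≥ c whenever M \ N is infinite. Let C ⊆ [ℕ]^ω be a family of cardinality 𝔠 consisting of pairwise almost disjoint sets (M ∩ N finite for all distinct M, N ∈ C). Then the closed ideals J^{{T_N : N ∈ A}}, for A ⊆ C, are pairwise distinct; in particular L(X) has 2^𝔠 distinct closed ideals. -/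
noncomputable section

open scoped Classical

variable {X : Type} [NormedAddCommGroup X] [NormedSpace ℝ X] [CompleteSpace X]

/-- The closed (two-sided) ideal of `L(X)` generated by a set `𝒯` of operators:
the operator-norm closure of `{Σ_{j<n} A_j ∘ T_j ∘ B_j : T_j ∈ 𝒯, A_j, B_j ∈ L(X)}`. -/
def genIdeal (𝒯 : Set (X →L[ℝ] X)) : Set (X →L[ℝ] X) :=
  closure {S : X →L[ℝ] X | ∃ (n : ℕ) (Tj Aj Bj : Fin n → (X →L[ℝ] X)),
    (∀ j, Tj j ∈ 𝒯) ∧ S = ∑ j, (Aj j).comp ((Tj j).comp (Bj j))}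

/-- `J` is a closed (two-sided) ideal of `L(X)`: a closed linear subspace closed under
composition on the left and on the right with arbitrary bounded operators. -/
def IsClosedIdeal (J : Set (X →L[ℝ] X)) : Prop :=
  IsClosed J ∧ (∃ p : Submodule ℝ (X →L[ℝ] X), (p : Set (X →L[ℝ] X)) = J) ∧
  ∀ T ∈ J, ∀ A B : X →L[ℝ] X, A.comp (T.comp B) ∈ J

set_option linter.unusedSectionVars false

/-! ### Auxiliary lemmas -/

/-- The generating set of `genIdeal`, before taking the closure. -/
def preI (𝒯 : Set (X →L[ℝ] X)) : Set (X →L[ℝ] X) :=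
  {S : X →L[ℝ] X | ∃ (n : ℕ) (Tj Aj Bj : Fin n → (X →L[ℝ] X)),
    (∀ j, Tj j ∈ 𝒯) ∧ S = ∑ j, (Aj j).comp ((Tj j).comp (Bj j))}

lemma genIdeal_eq (𝒯 : Set (X →L[ℝ] X)) : genIdeal 𝒯 = closure (preI 𝒯) := rfl

lemma preI_zero (𝒯 : Set (X →L[ℝ] X)) : (0 : X →L[ℝ] X) ∈ preI 𝒯 :=
  ⟨0, fun j => j.elim0, fun j => j.elim0, fun j => j.elim0, fun j => j.elim0, by simp⟩

lemma preI_add {𝒯 : Set (X →L[ℝ] X)} {S₁ S₂ : X →L[ℝ] X}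
    (h₁ : S₁ ∈ preI 𝒯) (h₂ : S₂ ∈ preI 𝒯) : S₁ + S₂ ∈ preI 𝒯 := by
  obtain ⟨n, Tj, Aj, Bj, hT, rfl⟩ := h₁
  obtain ⟨m, Tj', Aj', Bj', hT', rfl⟩ := h₂
  refine ⟨n + m, Fin.append Tj Tj', Fin.append Aj Aj', Fin.append Bj Bj', ?_, ?_⟩
  · intro j
    refine Fin.addCases (fun i => ?_) (fun i => ?_) j
    · rw [Fin.append_left]; exact hT i
    · rw [Fin.append_right]; exact hT' i
  · rw [Fin.sum_univ_add]
    simp [Fin.append_left, Fin.append_right]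

lemma preI_smul {𝒯 : Set (X →L[ℝ] X)} (a : ℝ) {S : X →L[ℝ] X}
    (h : S ∈ preI 𝒯) : a • S ∈ preI 𝒯 := by
  obtain ⟨n, Tj, Aj, Bj, hT, rfl⟩ := h
  refine ⟨n, Tj, fun j => a • Aj j, Bj, hT, ?_⟩
  rw [Finset.smul_sum]
  simp [ContinuousLinearMap.smul_comp]

/-- The generating set as a submodule of `L(X)`. -/
def preSub (𝒯 : Set (X →L[ℝ] X)) : Submodule ℝ (X →L[ℝ] X) where
  carrier := preI 𝒯
  add_mem' := preI_add
  zero_mem' := preI_zero 𝒯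
  smul_mem' := fun a _ h => preI_smul a h

lemma genIdeal_coe (𝒯 : Set (X →L[ℝ] X)) :
    ((preSub 𝒯).topologicalClosure : Set (X →L[ℝ] X)) = genIdeal 𝒯 := by
  rw [genIdeal_eq]
  exact Submodule.topologicalClosure_coe _

lemma mem_genIdeal_of_mem {𝒯 : Set (X →L[ℝ] X)} {T₀ : X →L[ℝ] X} (h : T₀ ∈ 𝒯) :
    T₀ ∈ genIdeal 𝒯 := by
  rw [genIdeal_eq]
  refine subset_closure ⟨1, fun _ => T₀, fun _ => 1, fun _ => 1, fun _ => h, ?_⟩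
  simp [ContinuousLinearMap.one_def]

lemma genIdeal_comp_mem {𝒯 : Set (X →L[ℝ] X)} {S : X →L[ℝ] X}
    (h : S ∈ genIdeal 𝒯) (A B : X →L[ℝ] X) : A.comp (S.comp B) ∈ genIdeal 𝒯 := by
  have hcont : Continuous (fun S : X →L[ℝ] X => A.comp (S.comp B)) := by
    have : (fun S : X →L[ℝ] X => A.comp (S.comp B)) = fun S => A * S * B := by
      funext S; rfl
    rw [this]
    exact (continuous_const.mul continuous_id).mul continuous_const
  have hmaps : Set.MapsTo (fun S : X →L[ℝ] X => A.comp (S.comp B)) (preI 𝒯) (preI 𝒯) := by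
    rintro S ⟨n, Tj, Aj, Bj, hT, rfl⟩
    refine ⟨n, Tj, fun j => A.comp (Aj j), fun j => (Bj j).comp B, hT, ?_⟩
    show A * ((∑ j, Aj j * (Tj j * Bj j)) * B) = ∑ j, A * Aj j * (Tj j * (Bj j * B))
    rw [Finset.sum_mul, Finset.mul_sum]
    exact Finset.sum_congr rfl fun j _ => by rw [mul_assoc, mul_assoc, mul_assoc]
  rw [genIdeal_eq] at h ⊢
  exact hmaps.closure hcont h

lemma genIdeal_sum_mem {𝒯 : Set (X →L[ℝ] X)} {n : ℕ} {f : Fin n → (X →L[ℝ] X)}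
    (h : ∀ j, f j ∈ genIdeal 𝒯) : ∑ j, f j ∈ genIdeal 𝒯 := by
  have h' : ∀ j, f j ∈ (preSub 𝒯).topologicalClosure := by
    intro j; rw [← SetLike.mem_coe, genIdeal_coe]; exact h j
  have := Submodule.sum_mem (preSub 𝒯).topologicalClosure (fun j (_ : j ∈ Finset.univ) => h' j)
  rwa [← SetLike.mem_coe, genIdeal_coe] at this

lemma isClosedIdeal_genIdeal (𝒯 : Set (X →L[ℝ] X)) : IsClosedIdeal (genIdeal 𝒯) :=
  ⟨isClosed_closure, ⟨(preSub 𝒯).topologicalClosure, genIdeal_coe 𝒯⟩,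
    fun _ hS A B => genIdeal_comp_mem hS A B⟩

/-- Key estimate: if `N ∈ C \ A₂`, every element of `genIdeal (T '' A₂)` is at
distance at least `c` from `T N`.  Indeed, any finite sum `Σ Aⱼ T_{Mⱼ} Bⱼ` with
`Mⱼ ∈ A₂` lies in `genIdeal {T M*}` for `M* = M₀ ∪ ⋃ Mⱼ`, and `N \ M*` is infinite
by almost disjointness, so the tree condition gives the bound; it passes to the
closure by continuity. -/
lemma key_dist {T : Set ℕ → (X →L[ℝ] X)} {c : ℝ}
    (htree₁ : ∀ M N : Set ℕ, M.Infinite → N.Infinite → M ⊆ N → T M ∈ genIdeal {T N})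
    (htree₂ : ∀ M N : Set ℕ, M.Infinite → N.Infinite → (M \ N).Infinite →
      c ≤ Metric.infDist (T M) (genIdeal {T N}))
    {C : Set (Set ℕ)} (hCinf : ∀ N ∈ C, N.Infinite)
    (hCad : ∀ M ∈ C, ∀ N ∈ C, M ≠ N → (M ∩ N).Finite)
    {A₂ : Set (Set ℕ)} (hA₂ : A₂ ⊆ C)
    {N M₀ : Set ℕ} (hN : N ∈ C) (hNA : N ∉ A₂) (hM₀ : M₀ ∈ C) (hM₀N : M₀ ≠ N) :
    ∀ S ∈ genIdeal (T '' A₂), c ≤ ‖T N - S‖ := by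
  have hclosed : IsClosed {S : X →L[ℝ] X | c ≤ ‖T N - S‖} := by
    have : Continuous fun S : X →L[ℝ] X => ‖T N - S‖ :=
      (continuous_const.sub continuous_id).norm
    exact isClosed_le continuous_const this
  rw [genIdeal_eq]
  refine closure_minimal ?_ hclosed
  rintro S ⟨n, Tj, Aj, Bj, hT, rfl⟩
  choose g hg hTg using hT
  set Ms : Set ℕ := M₀ ∪ ⋃ j, g j with hMs
  have hMsInf : Ms.Infinite := (hCinf M₀ hM₀).mono Set.subset_union_left
  have hgC : ∀ j, g j ∈ C := fun j => hA₂ (hg j)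
  have hgN : ∀ j, N ≠ g j := by
    intro j h; exact hNA (h ▸ hg j)
  have hfin : (N ∩ Ms).Finite := by
    rw [hMs, Set.inter_union_distrib_left, Set.inter_iUnion]
    exact Set.Finite.union (hCad N hN M₀ hM₀ (Ne.symm hM₀N))
      (Set.finite_iUnion fun j => hCad N hN (g j) (hgC j) (hgN j))
  have hdiff : (N \ Ms).Infinite := by
    have := (hCinf N hN).diff hfin
    rwa [Set.diff_self_inter] at this
  have hSmem : (∑ j, (Aj j).comp ((Tj j).comp (Bj j))) ∈ genIdeal {T Ms} := by
    refine genIdeal_sum_mem fun j => ?_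
    have hsub : g j ⊆ Ms :=
      Set.subset_union_of_subset_right (Set.subset_iUnion g j) _
    have := htree₁ (g j) Ms (hCinf _ (hgC j)) hMsInf hsub
    rw [hTg j] at this
    exact genIdeal_comp_mem this (Aj j) (Bj j)
  have h2 := htree₂ N Ms (hCinf N hN) hMsInf hdiff
  calc c ≤ Metric.infDist (T N) (genIdeal {T Ms}) := h2
    _ ≤ dist (T N) (∑ j, (Aj j).comp ((Tj j).comp (Bj j))) :=
        Metric.infDist_le_dist_of_mem hSmem
    _ = ‖T N - ∑ j, (Aj j).comp ((Tj j).comp (Bj j))‖ := dist_eq_norm _ _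

/-- Let `(T_N : N ∈ [ℕ]^ω)` be a uniformly bounded family of
operators on a Banach space `X` satisfying the tree condition for some `c > 0`:
`T_M ∈ J^{T_N}` whenever `M ⊆ N`, and `dist(T_M, J^{T_N}) ≥ c` whenever `M \ N` is
infinite.  If `C ⊆ [ℕ]^ω` has cardinality `𝔠` and consists of pairwise almost
disjoint sets, then the closed ideals `J^{{T_N : N ∈ A}}`, `A ⊆ C`, are pairwise
distinct; in particular, `L(X)` has `2^𝔠` distinct closed ideals. -/
theorem tree_condition_ideals {X : Type} [NormedAddCommGroup X] [NormedSpace ℝ X]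
    [CompleteSpace X] (T : Set ℕ → (X →L[ℝ] X))
    (hbdd : ∃ C₀ : ℝ, ∀ N : Set ℕ, N.Infinite → ‖T N‖ ≤ C₀)
    (c : ℝ) (hc : 0 < c)
    (htree₁ : ∀ M N : Set ℕ, M.Infinite → N.Infinite → M ⊆ N →
      T M ∈ genIdeal {T N})
    (htree₂ : ∀ M N : Set ℕ, M.Infinite → N.Infinite → (M \ N).Infinite →
      c ≤ Metric.infDist (T M) (genIdeal {T N}))
    (C : Set (Set ℕ)) (hCinf : ∀ N ∈ C, N.Infinite)
    (hCcard : Cardinal.mk C = Cardinal.continuum)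
    (hCad : ∀ M ∈ C, ∀ N ∈ C, M ≠ N → (M ∩ N).Finite) :
    (∀ A₁ A₂ : Set (Set ℕ), A₁ ⊆ C → A₂ ⊆ C →
      genIdeal (T '' A₁) = genIdeal (T '' A₂) → A₁ = A₂) ∧
    2 ^ Cardinal.continuum ≤
      Cardinal.mk {J : Set (X →L[ℝ] X) // IsClosedIdeal J} := by
  have hnontriv : Nontrivial C := by
    rw [← Cardinal.one_lt_iff_nontrivial, hCcard]
    exact lt_trans Cardinal.one_lt_aleph0 Cardinal.aleph0_lt_continuum
  have hnot : ∀ A : Set (Set ℕ), A ⊆ C → ∀ N ∈ C, N ∉ A → T N ∉ genIdeal (T '' A) := by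
    intro A hA N hNC hNA hmem
    obtain ⟨M₀', hM₀'⟩ := exists_ne (⟨N, hNC⟩ : C)
    have hM₀N : (M₀' : Set ℕ) ≠ N := by
      intro h; exact hM₀' (Subtype.ext h)
    have := key_dist htree₁ htree₂ hCinf hCad hA hNC hNA M₀'.2 hM₀N (T N) hmem
    rw [sub_self, norm_zero] at this
    exact absurd (lt_of_lt_of_le hc this) (lt_irrefl 0)
  have h1 : ∀ A₁ A₂ : Set (Set ℕ), A₁ ⊆ C → A₂ ⊆ C →
      genIdeal (T '' A₁) = genIdeal (T '' A₂) → A₁ = A₂ := by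
    intro A₁ A₂ hA₁ hA₂ heq
    ext N
    constructor
    · intro hN
      by_contra hN2
      exact hnot A₂ hA₂ N (hA₁ hN) hN2
        (heq ▸ mem_genIdeal_of_mem ⟨N, hN, rfl⟩)
    · intro hN
      by_contra hN2
      exact hnot A₁ hA₁ N (hA₂ hN) hN2
        (heq.symm ▸ mem_genIdeal_of_mem ⟨N, hN, rfl⟩)
  refine ⟨h1, ?_⟩
  have hinj : Function.Injective (fun A : Set C =>
      (⟨genIdeal (T '' (Subtype.val '' A)), isClosedIdeal_genIdeal _⟩ :
        {J : Set (X →L[ℝ] X) // IsClosedIdeal J})) := by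
    intro A B hAB
    have hval : genIdeal (T '' (Subtype.val '' A)) = genIdeal (T '' (Subtype.val '' B)) :=
      congrArg Subtype.val hAB
    have hsubA : Subtype.val '' A ⊆ C := by rintro _ ⟨x, _, rfl⟩; exact x.2
    have hsubB : Subtype.val '' B ⊆ C := by rintro _ ⟨x, _, rfl⟩; exact x.2
    have := h1 _ _ hsubA hsubB hval
    exact Set.image_injective.mpr Subtype.val_injective this
  calc (2 : Cardinal) ^ Cardinal.continuum = 2 ^ Cardinal.mk C := by rw [hCcard]
    _ = Cardinal.mk (Set C) := (Cardinal.mk_set).symm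
    _ ≤ Cardinal.mk {J : Set (X →L[ℝ] X) // IsClosedIdeal J} :=
        Cardinal.mk_le_of_injective hinj
end
end

section
/- For every countable ordinal ξ there exists a choice of γ-approximating sequences (α(γ,n))_{n=1}^∞ for all limit ordinals γ ≤ ξ (each consisting of successor ordinals in [1,γ) strictly increasing to γ) such that the resulting Schreier families satisfy, for every limit ordinal γ ≤ ξ: α(γ,1) = 1, and for all n ∈ ℕ, whenever A, B ∈ S_{α(γ,n)} with 1 < A < B, then A ∪ B ∈ S_{α(γ,n+1)}. -/
/-
The families are built by transfinite recursion, choosing at each limit `γ`, by Hilbert's `ε`,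
a *good* approximating sequence for the families already built: one with `α(γ,1) = 1` such that
every set of `S_{α(γ,n)+1}` avoiding `0` already lies in `S_{α(γ,n+1)}`. The theorem follows for a
good sequence, since `A ∪ B` is a union of two successive sets of `S_{α(γ,n)}` above `1`, hence lies
in `S_{α(γ,n)+1}`.

Good sequences exist at countable limits because `S_β` is contained in `S_{θ+K}` up to the set
`{0}` whenever `β < θ` and `K` is large: the part of `A ∈ S_β` above some threshold `N` lies in
`S_θ`, and each of the fewer than `N` remaining elements (all `≥ 2` unless `A = {1}`) is added at
the cost of one successor step. Diagonalising against an enumeration of the countably many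
ordinals below `γ` then produces the sequence.
-/

noncomputable section

open scoped Classical

/-- The first uncountable ordinal. -/
def omegaOne : Ordinal := (Cardinal.aleph 1).ord

/-- `n ≤ A`, i.e. `n ≤ min A` (with `min ∅ = ∞`). -/
def finLE (n : ℕ) (A : Finset ℕ) : Prop := ∀ a ∈ A, n ≤ a

/-- The successor step in the definition of the Schreier families:
unions `E_1 ∪ ⋯ ∪ E_n` with `n ≤ E_1 < E_2 < ⋯ < E_n` and each `E_i` a nonempty member
of `F` (the empty set arises from `n = 0`). -/
def succStep (F : Set (Finset ℕ)) : Set (Finset ℕ) :=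
  {A | ∃ (n : ℕ) (E : Fin n → Finset ℕ),
        (∀ i, E i ∈ F) ∧ (∀ i, (E i).Nonempty) ∧
        (∀ i j : Fin n, i < j → finLT (E i) (E j)) ∧
        (∀ i, finLE n (E i)) ∧ A = Finset.univ.biUnion E}

/-- The data of Schreier families `S γ` for `γ ≤ ξ`, built from a choice of
`γ`-approximating sequences `α γ ·` (indexed by `n ≥ 1`) for the limit ordinals
`γ ≤ ξ`: each `α γ n` is a successor ordinal in `[1, γ)` and the sequence strictly
increases to `γ`. -/
structure PartialSchreier (ξ : Ordinal) where
  α : Ordinal → ℕ → Ordinal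
  S : Ordinal → Set (Finset ℕ)
  S_zero : S 0 = {A : Finset ℕ | A = ∅ ∨ ∃ n : ℕ, A = {n}}
  S_succ : ∀ γ : Ordinal, γ + 1 ≤ ξ → S (γ + 1) = succStep (S γ)
  S_limit : ∀ γ : Ordinal, Order.IsSuccLimit γ → γ ≤ ξ →
    S γ = {E : Finset ℕ | ∃ n : ℕ, 1 ≤ n ∧ finLE n E ∧ E ∈ S (α γ n)}
  α_pos : ∀ γ : Ordinal, Order.IsSuccLimit γ → γ ≤ ξ → ∀ n : ℕ, 1 ≤ n → 1 ≤ α γ n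
  α_lt : ∀ γ : Ordinal, Order.IsSuccLimit γ → γ ≤ ξ → ∀ n : ℕ, 1 ≤ n → α γ n < γ
  α_succOrd : ∀ γ : Ordinal, Order.IsSuccLimit γ → γ ≤ ξ → ∀ n : ℕ, 1 ≤ n →
    ∃ β : Ordinal, α γ n = β + 1
  α_mono : ∀ γ : Ordinal, Order.IsSuccLimit γ → γ ≤ ξ → ∀ n : ℕ, 1 ≤ n → α γ n < α γ (n + 1)
  α_tendsto : ∀ γ : Ordinal, Order.IsSuccLimit γ → γ ≤ ξ → ∀ β : Ordinal, β < γ →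
    ∃ n : ℕ, 1 ≤ n ∧ β < α γ n

open Order Filter

theorem finLE.mono {m n : ℕ} {A : Finset ℕ} (h : finLE n A) (hmn : m ≤ n) : finLE m A :=
  fun a ha => hmn.trans (h a ha)

theorem finLE.union {n : ℕ} {A B : Finset ℕ} (hA : finLE n A) (hB : finLE n B) :
    finLE n (A ∪ B) := by
  intro x hx
  rcases Finset.mem_union.1 hx with hx | hx
  exacts [hA x hx, hB x hx]

section succStep

variable {F : Set (Finset ℕ)} {A X Y : Finset ℕ}

theorem mem_succStep_iff :
    A ∈ succStep F ↔ ∃ L : List (Finset ℕ),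
      (∀ E ∈ L, E ∈ F ∧ E.Nonempty ∧ finLE L.length E) ∧ L.Pairwise finLT ∧
        A = L.toFinset.biUnion id := by
  constructor
  · rintro ⟨n, E, hF, hne, hlt, hle, rfl⟩
    refine ⟨List.ofFn E, ?_, List.pairwise_ofFn.2 hlt, ?_⟩
    · simp only [List.mem_ofFn', Set.mem_range, List.length_ofFn]
      rintro _ ⟨i, rfl⟩
      exact ⟨hF i, hne i, hle i⟩
    · ext a
      simp [List.mem_ofFn']
  · rintro ⟨L, hL, hpw, rfl⟩
    refine ⟨L.length, L.get, fun i => (hL _ (L.get_mem i)).1, fun i => (hL _ (L.get_mem i)).2.1,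
      List.pairwise_iff_get.1 hpw, fun i => (hL _ (L.get_mem i)).2.2, ?_⟩
    ext a
    simp [List.mem_iff_get]

theorem biUnion_mem_succStep {L : List (Finset ℕ)} (hF : ∀ E ∈ L, E ∈ F)
    (hle : ∀ E ∈ L, finLE L.length E) (hL : L.Pairwise finLT) :
    L.toFinset.biUnion id ∈ succStep F := by
  refine mem_succStep_iff.2 ⟨L.filter (·.Nonempty), fun E hE => ?_, hL.filter _, ?_⟩
  · obtain ⟨hEL, hE⟩ := List.mem_filter.1 hE
    exact ⟨hF E hEL, by simpa using hE, (hle E hEL).mono (List.length_filter_le _ _)⟩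
  · ext a
    simp only [Finset.mem_biUnion, List.mem_toFinset, List.mem_filter, id]
    exact ⟨fun ⟨E, hE, ha⟩ => ⟨E, ⟨hE, by simpa using ⟨a, ha⟩⟩, ha⟩,
      fun ⟨E, hE, ha⟩ => ⟨E, hE.1, ha⟩⟩

theorem IsLowerSet.succStep (hF : IsLowerSet F) : IsLowerSet (succStep F) := by
  intro A B hBA hA
  obtain ⟨L, hL, hpw, rfl⟩ := mem_succStep_iff.1 hA
  have hB : B = (L.map (· ∩ B)).toFinset.biUnion id := by
    ext b
    simp only [Finset.mem_biUnion, List.mem_toFinset, List.mem_map, id]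
    constructor
    · intro hb
      obtain ⟨E, hE, hbE⟩ := Finset.mem_biUnion.1 (hBA hb)
      exact ⟨_, ⟨E, List.mem_toFinset.1 hE, rfl⟩, Finset.mem_inter.2 ⟨hbE, hb⟩⟩
    · rintro ⟨_, ⟨E, -, rfl⟩, hb⟩
      exact (Finset.mem_inter.1 hb).2
  rw [hB]
  refine biUnion_mem_succStep ?_ ?_ (List.pairwise_map.2 (hpw.imp ?_))
  · simp only [List.mem_map]
    rintro _ ⟨E, hE, rfl⟩
    exact hF Finset.inter_subset_left (hL E hE).1
  · simp only [List.mem_map, List.length_map]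
    rintro _ ⟨E, hE, rfl⟩ a ha
    exact (hL E hE).2.2 a (Finset.mem_inter.1 ha).1
  · exact fun h a ha b hb => h a (Finset.mem_inter.1 ha).1 b (Finset.mem_inter.1 hb).1

theorem mem_succStep_of_mem (hA : A ∈ F) (h1 : finLE 1 A) : A ∈ succStep F := by
  simpa using biUnion_mem_succStep (L := [A]) (by simpa) (by simpa) (List.pairwise_singleton _ _)

theorem union_mem_succStep (hX : X ∈ F) (hY : Y ∈ F) (hX2 : finLE 2 X) (hY1 : finLE 1 Y)
    (hXY : finLT X Y) : X ∪ Y ∈ succStep F := by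
  rcases X.eq_empty_or_nonempty with rfl | ⟨x, hx⟩
  · simpa using mem_succStep_of_mem hY hY1
  have hY2 : finLE 2 Y := fun y hy => (hX2 x hx).trans (hXY x hx y hy).le
  simpa [Finset.biUnion_insert] using biUnion_mem_succStep (F := F) (L := [X, Y])
    (by simp [hX, hY]) (by simp [hX2, hY2]) (by simpa using hXY)

theorem finLE_one_of_mem_succStep (hA : A ∈ succStep F) : finLE 1 A := by
  obtain ⟨L, hL, -, rfl⟩ := mem_succStep_iff.1 hA
  intro a ha
  obtain ⟨E, hE, haE⟩ := Finset.mem_biUnion.1 ha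
  exact ((hL E (List.mem_toFinset.1 hE)).2.2 a haE).trans'
    (List.length_pos_of_mem (List.mem_toFinset.1 hE))

theorem mem_of_one_mem_succStep (hA : A ∈ succStep F) (h1 : 1 ∈ A) : A ∈ F := by
  obtain ⟨L, hL, -, rfl⟩ := mem_succStep_iff.1 hA
  rcases L with _ | ⟨E₀, _ | ⟨E₁, L⟩⟩
  · simp at h1
  · simpa using (hL E₀ (by simp)).1
  · obtain ⟨E, hE, h1E⟩ := Finset.mem_biUnion.1 h1
    have := (hL E (List.mem_toFinset.1 hE)).2.2 1 h1E
    simp at this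

end succStep

structure IsApproxSeq (γ : Ordinal) (d : ℕ → Ordinal) : Prop where
  lt : ∀ n, 1 ≤ n → d n < γ
  cofinal : ∀ β < γ, ∃ n, 1 ≤ n ∧ β < d n

structure IsGoodSeq (γ : Ordinal) (T : Ordinal → Set (Finset ℕ)) (d : ℕ → Ordinal) : Prop
    extends IsApproxSeq γ d where
  one : d 1 = 1
  succ : ∀ n, 1 ≤ n → ∃ σ, d n = σ + 1
  lt_succ : ∀ n, 1 ≤ n → d n < d (n + 1)
  mem_of_mem_add_one : ∀ n, 1 ≤ n → ∀ A ∈ T (d n + 1), finLE 1 A → A ∈ T (d (n + 1))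

/- At a limit `γ`, `α(γ, ·)` is chosen by `Classical.epsilon` among the good sequences for the
families below `γ` (extended by `∅`); it is junk unless a good sequence exists. -/
def schreier (γ : Ordinal) : Set (Finset ℕ) :=
  Ordinal.limitRecOn γ {A | A = ∅ ∨ ∃ n, A = {n}} (fun _ S => succStep S) fun γ _ S =>
    let T := fun β => if h : β < γ then S β h else ∅
    {E | ∃ n, 1 ≤ n ∧ finLE n E ∧ E ∈ T (Classical.epsilon (IsGoodSeq γ T) n)}

def schreierBelow (γ β : Ordinal) : Set (Finset ℕ) := if β < γ then schreier β else ∅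

def schreierSeq (γ : Ordinal) : ℕ → Ordinal := Classical.epsilon (IsGoodSeq γ (schreierBelow γ))

section schreier

variable {β γ θ : Ordinal} {A : Finset ℕ}

theorem schreier_zero : schreier 0 = {A | A = ∅ ∨ ∃ n, A = {n}} :=
  Ordinal.limitRecOn_zero _ _ _

theorem schreier_succ (γ : Ordinal) : schreier (γ + 1) = succStep (schreier γ) :=
  Ordinal.limitRecOn_add_one _ _ _ _

theorem schreier_limit (hγ : IsSuccLimit γ) :
    schreier γ = {E | ∃ n, 1 ≤ n ∧ finLE n E ∧ E ∈ schreierBelow γ (schreierSeq γ n)} := by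
  rw [schreier, Ordinal.limitRecOn_limit _ _ _ _ hγ]
  rfl

theorem schreierBelow_of_lt (h : β < γ) : schreierBelow γ β = schreier β := if_pos h

theorem mem_schreier_limit (hγ : IsSuccLimit γ) (hd : ∀ n, 1 ≤ n → schreierSeq γ n < γ) :
    A ∈ schreier γ ↔ ∃ n, 1 ≤ n ∧ finLE n A ∧ A ∈ schreier (schreierSeq γ n) := by
  rw [schreier_limit hγ]
  refine exists_congr fun n => and_congr_right fun hn => ?_
  rw [schreierBelow_of_lt (hd n hn)]

theorem isLowerSet_schreier (γ : Ordinal) : IsLowerSet (schreier γ) := by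
  induction γ using Ordinal.limitRecOn with
  | zero =>
    rw [schreier_zero]
    rintro A B hBA (rfl | ⟨n, rfl⟩)
    · exact Or.inl (Finset.subset_empty.1 hBA)
    · rcases Finset.subset_singleton_iff.1 hBA with rfl | rfl
      · exact Or.inl rfl
      · exact Or.inr ⟨n, rfl⟩
  | add_one γ ih =>
    rw [schreier_succ]
    exact ih.succStep
  | limit γ hγ ih =>
    rw [schreier_limit hγ]
    rintro A B hBA ⟨n, hn, hA, hmem⟩
    refine ⟨n, hn, fun b hb => hA b (hBA hb), ?_⟩
    unfold schreierBelow at hmem ⊢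
    split_ifs at hmem ⊢ with h
    · exact ih _ h hBA hmem
    · exact hmem

theorem eq_singleton_of_one_mem (hA : A ∈ schreier γ) (h1 : 1 ∈ A) : A = {1} := by
  induction γ using Ordinal.limitRecOn generalizing A with
  | zero =>
    rw [schreier_zero] at hA
    rcases hA with rfl | ⟨n, rfl⟩
    · simp at h1
    · rw [Finset.mem_singleton.1 h1]
  | add_one γ ih =>
    rw [schreier_succ] at hA
    exact ih (mem_of_one_mem_succStep hA h1) h1
  | limit γ hγ ih =>
    rw [schreier_limit hγ] at hA
    obtain ⟨n, hn, hnA, hmem⟩ := hA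
    obtain rfl : n = 1 := le_antisymm (hnA 1 h1) hn
    unfold schreierBelow at hmem
    split_ifs at hmem with h
    · exact ih _ h hmem h1
    · exact hmem.elim

def IsApproxUpTo (θ : Ordinal) : Prop :=
  ∀ β ≤ θ, IsSuccLimit β → IsApproxSeq β (schreierSeq β)

theorem IsApproxUpTo.mono (hθ : IsApproxUpTo θ) (hβ : β ≤ θ) : IsApproxUpTo β :=
  fun δ hδ => hθ δ (hδ.trans hβ)

theorem singleton_mem_schreier (hθ : IsApproxUpTo θ) {a : ℕ} (ha : 1 ≤ a) :
    {a} ∈ schreier θ := by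
  have ha' : finLE 1 {a} := by simpa [finLE] using ha
  induction θ using Ordinal.limitRecOn with
  | zero => exact schreier_zero ▸ Or.inr ⟨a, rfl⟩
  | add_one θ ih =>
    rw [schreier_succ]
    exact mem_succStep_of_mem (ih (hθ.mono (Order.le_succ θ))) ha'
  | limit θ hlim ih =>
    have hd := (hθ θ le_rfl hlim).lt
    exact (mem_schreier_limit hlim hd).2
      ⟨1, le_rfl, ha', ih _ (hd 1 le_rfl) (hθ.mono (hd 1 le_rfl).le)⟩

theorem mem_schreier_add_of_le (h1 : finLE 1 A) {k K : ℕ} (hkK : k ≤ K)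
    (hA : A ∈ schreier (θ + k)) : A ∈ schreier (θ + K) := by
  induction K, hkK using Nat.le_induction with
  | base => exact hA
  | succ K _ ih =>
    rw [Nat.cast_succ, ← add_assoc, schreier_succ]
    exact mem_succStep_of_mem ih h1

theorem mem_schreier_add (h1 : finLE 1 A) (hA : A ∈ schreier θ) (K : ℕ) :
    A ∈ schreier (θ + K) :=
  mem_schreier_add_of_le h1 K.zero_le (by simpa using hA)

theorem eventually_mem_schreier_of_lt (hθ : IsApproxUpTo θ) (hβ : β < θ) :
    ∀ᶠ N in atTop, ∀ A ∈ schreier β, finLE N A → A ∈ schreier θ := by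
  induction θ using Ordinal.limitRecOn generalizing β with
  | zero => exact absurd hβ not_lt_zero
  | add_one θ ih =>
    have hle : ∀ᶠ N in atTop, ∀ A ∈ schreier β, finLE N A → A ∈ schreier θ := by
      rcases (Order.lt_add_one_iff.1 hβ).eq_or_lt with rfl | hlt
      · exact .of_forall fun _ _ hA _ => hA
      · exact ih (hθ.mono (Order.le_succ θ)) hlt
    filter_upwards [hle, eventually_ge_atTop 1] with N hN hN1 A hA hNA
    rw [schreier_succ]
    exact mem_succStep_of_mem (hN A hA hNA) (hNA.mono hN1)
  | limit θ hlim ih =>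
    have hd := hθ θ le_rfl hlim
    obtain ⟨m, hm, hβm⟩ := hd.cofinal β hβ
    filter_upwards [ih _ (hd.lt m hm) (hθ.mono (hd.lt m hm).le) hβm, eventually_ge_atTop m]
      with N hN hNm A hA hNA
    exact (mem_schreier_limit hlim hd.lt).2 ⟨m, hm, hNA.mono hNm, hN A hA hNA⟩

theorem union_mem_schreier_add_card (hθ : IsApproxUpTo θ) {D G : Finset ℕ}
    (hG : G ∈ schreier θ) (hD : finLE 2 D) (hDG : finLT D G) :
    D ∪ G ∈ schreier (θ + D.card) := by
  induction D using Finset.induction_on_min with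
  | empty => simpa using hG
  | insert a D haD ih =>
    have ha : 2 ≤ a := hD a (Finset.mem_insert_self a D)
    have haG : ∀ g ∈ G, a < g := hDG a (Finset.mem_insert_self a D)
    have hDG' : finLT D G := fun x hx => hDG x (Finset.mem_insert_of_mem hx)
    have hDG1 : finLE 1 (D ∪ G) :=
      .union (fun x hx => by have := haD x hx; omega) (fun x hx => by have := haG x hx; omega)
    rw [Finset.card_insert_of_notMem (fun h => (haD a h).false), Finset.insert_eq,
      Finset.union_assoc, Nat.cast_succ, ← add_assoc, schreier_succ]
    refine union_mem_succStep ?_ (ih (fun x hx => hD x (Finset.mem_insert_of_mem hx)) hDG')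
      (by simpa [finLE] using ha) hDG1 ?_
    · exact mem_schreier_add (by simpa [finLE] using one_le_two.trans ha)
        (singleton_mem_schreier hθ (one_le_two.trans ha)) _
    · simpa [finLT] using fun x hx => (Finset.mem_union.1 hx).elim (haD x) (haG x)

theorem eventually_mem_schreier_add (hθ : IsApproxUpTo θ) (hβ : β < θ) :
    ∀ᶠ K : ℕ in atTop, ∀ A ∈ schreier β, finLE 1 A → A ∈ schreier (θ + K) := by
  obtain ⟨N, hN⟩ := eventually_atTop.1 (eventually_mem_schreier_of_lt hθ hβ)
  filter_upwards [eventually_ge_atTop N] with K hK A hA h1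
  by_cases h1A : 1 ∈ A
  · rw [eq_singleton_of_one_mem hA h1A]
    exact mem_schreier_add (by simp [finLE]) (singleton_mem_schreier hθ le_rfl) K
  have hA2 : finLE 2 A := fun a ha => by
    have := h1 a ha
    have : a ≠ 1 := fun h => h1A (h ▸ ha)
    omega
  set D := A.filter (· < N)
  set G := A.filter (¬ · < N)
  have hG : G ∈ schreier θ :=
    hN N le_rfl G (isLowerSet_schreier β (Finset.filter_subset _ A) hA)
      fun a ha => not_lt.1 (Finset.mem_filter.1 ha).2
  have hDG : finLT D G := fun a ha b hb =>
    (Finset.mem_filter.1 ha).2.trans_le (not_lt.1 (Finset.mem_filter.1 hb).2)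
  have hD : D.card ≤ N := by
    simpa using Finset.card_le_card (show D ⊆ Finset.range N by
      intro a ha; simpa using (Finset.mem_filter.1 ha).2)
  have hAD : A ∈ schreier (θ + D.card) := by
    rw [← Finset.filter_union_filter_not_eq (· < N) A]
    exact union_mem_schreier_add_card hθ hG (fun a ha => hA2 a (Finset.mem_filter.1 ha).1) hDG
  exact mem_schreier_add_of_le h1 (hD.trans hK) hAD

theorem exists_succ_absorbing (hγ : IsSuccLimit γ) (hbelow : ∀ θ < γ, IsApproxUpTo θ)
    {η ρ : Ordinal} (hη : η < γ) (hρ : ρ < γ) :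
    ∃ ρ' < γ, (∃ σ, ρ' = σ + 1) ∧ ρ < ρ' ∧ η < ρ' ∧
      ∀ A ∈ schreier (ρ + 1), finLE 1 A → A ∈ schreier ρ' := by
  set θ := max (ρ + 1) η + 1
  have hθ : θ < γ := hγ.add_one_lt (max_lt (hγ.add_one_lt hρ) hη)
  have hρθ : ρ + 1 < θ := Order.lt_add_one_iff.2 (le_max_left _ _)
  obtain ⟨K, hK, hK1⟩ :=
    ((eventually_mem_schreier_add (hbelow θ hθ) hρθ).and (eventually_ge_atTop 1)).exists
  obtain ⟨k, rfl⟩ : ∃ k, K = k + 1 := ⟨K - 1, by omega⟩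
  have hθK : θ ≤ θ + (k + 1 : ℕ) := le_self_add
  refine ⟨θ + (k + 1 : ℕ), hγ.add_natCast_lt hθ _, ⟨θ + k, by rw [Nat.cast_succ, ← add_assoc]⟩,
    ?_, ?_, hK⟩
  · exact ((lt_add_one ρ).trans hρθ).trans_le hθK
  · exact ((le_max_right _ _).trans_lt (lt_add_one _)).trans_le hθK

end schreier

theorem countable_Iio_of_lt_omegaOne {γ : Ordinal} (hγ : γ < omegaOne) : (Set.Iio γ).Countable := by
  rw [← Cardinal.le_aleph0_iff_set_countable, Cardinal.mk_Iio_ordinal, Cardinal.lift_le_aleph0,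
    ← Cardinal.lt_aleph_one_iff]
  exact Cardinal.lt_ord.1 hγ

theorem exists_seq_of_step {γ : Ordinal} (hγ : γ < omegaOne) (h1 : 1 < γ)
    (R : Ordinal → Ordinal → Prop)
    (hstep : ∀ η < γ, ∀ ρ < γ, ∃ ρ' < γ, (∃ σ, ρ' = σ + 1) ∧ ρ < ρ' ∧ η < ρ' ∧ R ρ ρ') :
    ∃ d : ℕ → Ordinal, IsApproxSeq γ d ∧ d 1 = 1 ∧ ∀ n, 1 ≤ n →
      (∃ σ, d n = σ + 1) ∧ d n < d (n + 1) ∧ R (d n) (d (n + 1)) := by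
  have : Countable (Set.Iio γ) := (countable_Iio_of_lt_omegaOne hγ).to_subtype
  have : Nonempty (Set.Iio γ) := ⟨⟨1, h1⟩⟩
  obtain ⟨g, hg⟩ := exists_surjective_nat (Set.Iio γ)
  choose next hnext using fun η ρ : Set.Iio γ => hstep η η.2 ρ ρ.2
  -- `e k` is the term `d (k + 1)` of the sequence; its next term also overtakes `g k`.
  let e : ℕ → Set.Iio γ := fun k =>
    Nat.rec ⟨1, h1⟩ (fun k ρ => ⟨next (g k) ρ, (hnext (g k) ρ).1⟩) k
  have he (k : ℕ) : (e (k + 1) : Ordinal) = next (g k) (e k) := rfl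
  refine ⟨fun n => (e (n - 1)).1, ⟨fun n _ => (e (n - 1)).2, fun β hβ => ?_⟩, rfl, ?_⟩
  · obtain ⟨k, hk⟩ := hg ⟨β, hβ⟩
    obtain ⟨-, -, -, hβk, -⟩ := hnext (g k) (e k)
    exact ⟨k + 2, by omega, by simpa [he, hk] using hβk⟩
  · rintro (_ | k) hk
    · omega
    obtain ⟨-, -, hlt, -, hR⟩ := hnext (g k) (e k)
    refine ⟨?_, by simpa [he] using hlt, by simpa [he] using hR⟩
    rcases k with _ | j
    · exact ⟨0, (zero_add 1).symm⟩
    · simpa [he] using (hnext (g j) (e j)).2.1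

theorem exists_isGoodSeq {γ : Ordinal} (hγω : γ < omegaOne) (hγ : IsSuccLimit γ)
    (hbelow : ∀ θ < γ, IsApproxUpTo θ) : ∃ d, IsGoodSeq γ (schreierBelow γ) d := by
  obtain ⟨d, hd, hd1, hstep⟩ := exists_seq_of_step hγω (Ordinal.one_lt_of_isSuccLimit hγ)
    (fun ρ ρ' => ∀ A ∈ schreier (ρ + 1), finLE 1 A → A ∈ schreier ρ')
    fun η hη ρ hρ => exists_succ_absorbing hγ hbelow hη hρ
  refine ⟨d, hd, hd1, fun n hn => (hstep n hn).1, fun n hn => (hstep n hn).2.1,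
    fun n hn A hA h1 => ?_⟩
  rw [schreierBelow_of_lt (hγ.add_one_lt (hd.lt n hn))] at hA
  rw [schreierBelow_of_lt (hd.lt (n + 1) (by omega))]
  exact (hstep n hn).2.2 A hA h1

theorem isGoodSeq_schreierSeq {γ : Ordinal} (hγω : γ < omegaOne) (hγ : IsSuccLimit γ) :
    IsGoodSeq γ (schreierBelow γ) (schreierSeq γ) := by
  induction γ using WellFoundedLT.induction with
  | _ γ ih =>
    refine Classical.epsilon_spec (exists_isGoodSeq hγω hγ fun θ hθ β hβθ hβ => ?_)
    have hβγ := hβθ.trans_lt hθ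
    exact (ih β hβγ (hβγ.trans hγω) hβ).toIsApproxSeq

theorem IsGoodSeq.union_mem {γ : Ordinal} {d : ℕ → Ordinal} (hγ : IsSuccLimit γ)
    (hd : IsGoodSeq γ (schreierBelow γ) d) {n : ℕ} (hn : 1 ≤ n) {A B : Finset ℕ}
    (hA : A ∈ schreier (d n)) (hB : B ∈ schreier (d n)) (hA2 : finLE 2 A) (hAB : finLT A B) :
    A ∪ B ∈ schreier (d (n + 1)) := by
  have hB1 : finLE 1 B := by
    obtain ⟨σ, hσ⟩ := hd.succ n hn
    rw [hσ, schreier_succ] at hB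
    exact finLE_one_of_mem_succStep hB
  have hAB1 : finLE 1 (A ∪ B) := (hA2.mono one_le_two).union hB1
  have hsucc : A ∪ B ∈ schreierBelow γ (d n + 1) := by
    rw [schreierBelow_of_lt (hγ.add_one_lt (hd.lt n hn)), schreier_succ]
    exact union_mem_succStep hA hB hA2 hB1 hAB
  simpa [schreierBelow_of_lt (hd.lt (n + 1) (by omega))] using
    hd.mem_of_mem_add_one n hn _ hsucc hAB1

def schreierSystem (ξ : Ordinal) (hξ : ξ < omegaOne) : PartialSchreier ξ where
  α := schreierSeq
  S := schreier
  S_zero := schreier_zero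
  S_succ γ _ := schreier_succ γ
  S_limit γ hγ hγξ :=
    Set.ext fun _ => mem_schreier_limit hγ (isGoodSeq_schreierSeq (hγξ.trans_lt hξ) hγ).lt
  α_pos γ hγ hγξ n hn := by
    obtain ⟨σ, hσ⟩ := (isGoodSeq_schreierSeq (hγξ.trans_lt hξ) hγ).succ n hn
    exact hσ ▸ le_add_self
  α_lt γ hγ hγξ := (isGoodSeq_schreierSeq (hγξ.trans_lt hξ) hγ).lt
  α_succOrd γ hγ hγξ := (isGoodSeq_schreierSeq (hγξ.trans_lt hξ) hγ).succ
  α_mono γ hγ hγξ := (isGoodSeq_schreierSeq (hγξ.trans_lt hξ) hγ).lt_succ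
  α_tendsto γ hγ hγξ := (isGoodSeq_schreierSeq (hγξ.trans_lt hξ) hγ).cofinal

/-- For every countable ordinal `ξ` there exists a choice of
`γ`-approximating sequences for all limit ordinals `γ ≤ ξ` such that the resulting
Schreier families satisfy, for every limit `γ ≤ ξ`:  `α γ 1 = 1`, and whenever
`A, B ∈ S (α γ n)` with `1 < A < B`, then `A ∪ B ∈ S (α γ (n+1))`. -/
theorem exists_good_approximating_sequences (ξ : Ordinal) (hξ : ξ < omegaOne) :
    ∃ P : PartialSchreier ξ, ∀ γ : Ordinal, Order.IsSuccLimit γ → γ ≤ ξ →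
      P.α γ 1 = 1 ∧
      ∀ n : ℕ, 1 ≤ n → ∀ A B : Finset ℕ,
        A ∈ P.S (P.α γ n) → B ∈ P.S (P.α γ n) → finLE 2 A → finLT A B →
          A ∪ B ∈ P.S (P.α γ (n + 1)) := by
  refine ⟨schreierSystem ξ hξ, fun γ hγ hγξ => ?_⟩
  have hgood := isGoodSeq_schreierSeq (hγξ.trans_lt hξ) hγ
  exact ⟨hgood.one, fun n hn A B hA hB hA2 hAB => hgood.union_mem hγ hn hA hB hA2 hAB⟩
end
end
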